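/- arXiv:1303.3323 — 10 statements merged into one kernel-verified Lean document; each statement's English description precedes it below -/
import Mathlib

section
/- For every n ≥ 1 and every k ≥ 1 there exists a U-cycle for the set of all words of length n over a k-letter alphabet; that is, there is a cyclic sequence of length k^n over Fin k whose k^n windows of length n are exactly the k^n words, each appearing exactly once. -/
/-- A U-cycle for a finite set `S` of `n`-letter words over the alphabet `Fin k`:
a cyclic sequence `s` of length `|S|` whose windows of length `n` enumerate `S`
bijectively. -/
def IsUCycle {n k : ℕ} (S : Finset (Fin n → Fin k)) (s : ZMod S.card → Fin k) : Prop :=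
  Set.BijOn (fun i : ZMod S.card => fun j : Fin n => s (i + ((j : ℕ) : ZMod S.card)))
    Set.univ ↑S

/-!
A permutation `σ` of the words of length `m + 1` with `Fin.init (σ w) = Fin.tail w` splits the
de Bruijn graph into disjoint cycles; if it has a single cycle, the first letters of the words
along it form the U-cycle. Rotation of words is such a permutation. If the cycle of a word `w₀`
misses some word, then some `x` on it and some `y` off it differ only in their first letter,
since otherwise the cycle would be closed under `w ↦ Fin.cons c (Fin.init w)` and hence contain
every word. Then `σ * swap x y` is again such a permutation, and it joins the cycles of `x` and
`y`. So a shift permutation whose cycle through `w₀` is as long as possible has a single cycle.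
-/

open Function Equiv

namespace Equiv.Perm

variable {β : Type*} {σ : Perm β} {x y a : β}

theorem sameCycle_mul_swap_of_not_sameCycle [Finite β] [DecidableEq β]
    (hxy : ¬σ.SameCycle x y) (ha : σ.SameCycle x a) : (σ * swap x y).SameCycle y a := by
  set τ := σ * swap x y
  have hτy : τ y = σ x := by simp [τ]
  have hstep : ∀ b, σ.SameCycle x b → τ.SameCycle y b → τ.SameCycle y (σ b) := by
    intro b hxb hyb
    by_cases hbx : b = x
    · subst hbx
      exact hτy ▸ sameCycle_apply_right.2 (SameCycle.refl _ _)
    · have hby : b ≠ y := fun h => hxy (h ▸ hxb)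
      have hτb : τ b = σ b := by simp [τ, swap_apply_of_ne_of_ne hbx hby]
      exact hτb ▸ sameCycle_apply_right.2 hyb
  have hiter : ∀ j : ℕ, τ.SameCycle y ((σ ^ (j + 1)) x) := by
    intro j
    induction j with
    | zero => exact hτy ▸ sameCycle_apply_right.2 (SameCycle.refl _ _)
    | succ j ih =>
      rw [pow_succ', mul_apply]
      exact hstep _ (sameCycle_pow_right.2 (SameCycle.refl _ _)) ih
  obtain ⟨j, rfl⟩ := ha.exists_nat_pow_eq
  have hord := orderOf_pos σ
  have := hiter (j + orderOf σ - 1)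
  rwa [Nat.sub_add_cancel (by omega), pow_add, pow_orderOf_eq_one, mul_one] at this

theorem minimalPeriod_eq_card_of_forall_sameCycle [Fintype β] (h : ∀ y, σ.SameCycle x y) :
    minimalPeriod σ x = Fintype.card β := by
  have hper : IsPeriodicPt σ (orderOf σ) x := by
    simp [IsPeriodicPt, IsFixedPt, iterate_eq_pow, pow_orderOf_eq_one]
  have hpos := hper.minimalPeriod_pos (orderOf_pos σ)
  have hbij : Bijective fun j : Fin (minimalPeriod σ x) => σ^[j] x := by
    refine ⟨fun i j hij => Fin.ext (iterate_injOn_Iio_minimalPeriod i.2 j.2 hij), fun u => ?_⟩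
    obtain ⟨j, rfl⟩ := (h u).exists_nat_pow_eq
    exact ⟨⟨j % _, Nat.mod_lt _ hpos⟩, by simp [iterate_mod_minimalPeriod_eq, iterate_eq_pow]⟩
  simpa using Fintype.card_of_bijective hbij

end Equiv.Perm

namespace DeBruijn

variable {α : Type*} {m : ℕ}

def IsShiftPerm (σ : Perm (Fin (m + 1) → α)) : Prop :=
  ∀ w, Fin.init (σ w) = Fin.tail w

variable {σ : Perm (Fin (m + 1) → α)}

theorem isShiftPerm_rotate : IsShiftPerm ((finRotate (m + 1)).symm.arrowCongr (Equiv.refl α)) := by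
  intro w
  ext i
  simp [Fin.init, Fin.tail]

theorem IsShiftPerm.mul_swap [DecidableEq α] (hσ : IsShiftPerm σ) {x y : Fin (m + 1) → α}
    (hxy : Fin.tail x = Fin.tail y) : IsShiftPerm (σ * swap x y) := by
  intro w
  rw [Perm.mul_apply, hσ, swap_apply_def]
  split_ifs with hx hy
  · rw [hx, hxy]
  · rw [hy, hxy]
  · rfl

theorem IsShiftPerm.iterate_apply_zero (hσ : IsShiftPerm σ) (j : Fin (m + 1))
    (w : Fin (m + 1) → α) : σ^[j] w 0 = w j := by
  induction j using Fin.induction generalizing w with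
  | zero => rfl
  | succ j ih =>
    rw [Fin.val_succ, iterate_succ_apply, ← Fin.val_castSucc, ih]
    exact congrFun (hσ w) j

theorem eq_univ_of_cons_init_mem {C : Set (Fin (m + 1) → α)} (hne : C.Nonempty)
    (hC : ∀ c w, w ∈ C → Fin.cons c (Fin.init w) ∈ C) : C = Set.univ := by
  obtain ⟨w₀, hw₀⟩ := hne
  -- prepending the letters of `u`, last one first, turns any word of `C` into `u`
  suffices h : ∀ j ≤ m + 1, ∀ u : Fin (m + 1) → α,
      (∃ w ∈ C, ∀ i (h : i + j < m + 1), u ⟨i + j, h⟩ = w ⟨i, by omega⟩) → u ∈ C from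
    Set.eq_univ_of_forall fun u => h (m + 1) le_rfl u ⟨w₀, hw₀, fun i h => by omega⟩
  intro j
  induction j with
  | zero =>
    rintro - u ⟨w, hw, hu⟩
    exact (funext fun i => hu i i.2 : u = w) ▸ hw
  | succ j ih =>
    rintro hj u ⟨w, hw, hu⟩
    refine ih (by omega) u ⟨_, hC (u ⟨j, by omega⟩) w hw, fun i h => ?_⟩
    cases i with
    | zero => simp
    | succ i =>
      exact (congrArg u (Fin.ext (by dsimp only; omega))).trans (hu i (by omega))

theorem IsShiftPerm.sameCycle_of_forall_tail_eq (hσ : IsShiftPerm σ) {w₀ : Fin (m + 1) → α}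
    (hclosed : ∀ x y, σ.SameCycle w₀ x → Fin.tail x = Fin.tail y → σ.SameCycle w₀ y)
    (u : Fin (m + 1) → α) : σ.SameCycle w₀ u := by
  have hcycle : {u | σ.SameCycle w₀ u} = Set.univ := by
    refine eq_univ_of_cons_init_mem ⟨w₀, Perm.SameCycle.refl _ _⟩ fun c w hw => ?_
    -- `σ.symm w` lies on the cycle and its tail is `Fin.init w`, so only its first letter changes
    refine hclosed (σ.symm w) _ hw.symm_apply_right ?_
    rw [Fin.tail_cons, ← hσ, apply_symm_apply]
  exact Set.eq_univ_iff_forall.1 hcycle u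

theorem exists_isShiftPerm_forall_sameCycle [Fintype α] (w₀ : Fin (m + 1) → α) :
    ∃ σ : Perm (Fin (m + 1) → α), IsShiftPerm σ ∧ ∀ u, σ.SameCycle w₀ u := by
  classical
  obtain ⟨σ, hσ, hmax⟩ := Set.exists_max_image {σ | IsShiftPerm σ}
    (fun σ : Perm (Fin (m + 1) → α) => {u | σ.SameCycle w₀ u}.ncard) (Set.toFinite _)
    ⟨_, isShiftPerm_rotate⟩
  refine ⟨σ, hσ, hσ.sameCycle_of_forall_tail_eq fun x y hx hxy => ?_⟩
  by_contra hy
  have hjoin : ∀ a, σ.SameCycle x a → (σ * swap x y).SameCycle y a :=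
    fun a => Perm.sameCycle_mul_swap_of_not_sameCycle fun h => hy (hx.trans h)
  have hy₀ : (σ * swap x y).SameCycle y w₀ := hjoin w₀ hx.symm
  have hlt : {u | σ.SameCycle w₀ u}.ncard < {u | (σ * swap x y).SameCycle w₀ u}.ncard :=
    Set.ncard_lt_ncard ⟨fun a ha => hy₀.symm.trans (hjoin a (hx.symm.trans ha)),
      fun hsub => hy (hsub hy₀.symm)⟩
  exact (hmax _ (hσ.mul_swap hxy)).not_gt hlt

theorem exists_deBruijn_sequence [Fintype α] [Nonempty α] :
    ∃ s : ZMod (Fintype.card (Fin (m + 1) → α)) → α,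
      Bijective fun i (j : Fin (m + 1)) => s (i + (j : ℕ)) := by
  obtain ⟨w₀⟩ := (inferInstance : Nonempty (Fin (m + 1) → α))
  obtain ⟨σ, hσ, hcyc⟩ := exists_isShiftPerm_forall_sameCycle w₀
  set N := Fintype.card (Fin (m + 1) → α)
  have hN : minimalPeriod σ w₀ = N := Perm.minimalPeriod_eq_card_of_forall_sameCycle hcyc
  have : NeZero N := ⟨Fintype.card_ne_zero⟩
  have hmod : ∀ a, σ^[a % N] w₀ = σ^[a] w₀ := fun a => hN ▸ iterate_mod_minimalPeriod_eq
  refine ⟨fun i => σ^[i.val] w₀ 0, ?_⟩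
  have hwindow : (fun (i : ZMod N) (j : Fin (m + 1)) => σ^[(i + (j : ℕ)).val] w₀ 0) =
      fun (i : ZMod N) => σ^[i.val] w₀ := by
    funext i j
    rw [ZMod.val_add, ZMod.val_natCast, Nat.add_mod_mod, hmod,
      add_comm i.val, iterate_add_apply, hσ.iterate_apply_zero]
  rw [hwindow, Fintype.bijective_iff_injective_and_card]
  refine ⟨fun i j hij => ZMod.val_injective N ?_, by simp [N]⟩
  exact iterate_injOn_Iio_minimalPeriod (by rw [hN]; exact i.val_lt) (by rw [hN]; exact j.val_lt)
    hij

end DeBruijn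

/-- de Bruijn's theorem: for every `n ≥ 1` and `k ≥ 1` there exists a U-cycle for the
set of all `n`-letter words over a `k`-letter alphabet. -/
theorem exists_ucycle_all_words (n k : ℕ) (hn : 1 ≤ n) (hk : 1 ≤ k) :
    ∃ s : ZMod (Finset.univ : Finset (Fin n → Fin k)).card → Fin k,
      IsUCycle Finset.univ s := by
  obtain ⟨m, rfl⟩ := Nat.exists_eq_add_of_le' hn
  have : Nonempty (Fin k) := ⟨⟨0, hk⟩⟩
  obtain ⟨s, hs⟩ := DeBruijn.exists_deBruijn_sequence (α := Fin k) (m := m)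
  exact ⟨s, by unfold IsUCycle; rw [Finset.coe_univ]; exact Set.bijOn_univ.2 hs⟩
end

section
/- Let k ≥ 3 and n ≥ 1. A U-cycle for the set of injective words of length n over a k-letter alphabet (one-to-one functions from Fin n to Fin k, i.e., n-letter words in which no letter repeats) exists if and only if k > n. -/
/-
If `k = n`, every window of a U-cycle `s` for the injective words is a permutation of the
alphabet, so the letter leaving a window is the one entering the next: `s` has period `n`.
Then the windows at `0` and `n` coincide, so `n! = N` divides `n`, which fails for `n ≥ 3`.

If `k > n`, a U-cycle is an Eulerian circuit of the graph whose arcs are the injective words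
`w`, running from the prefix `Fin.init w` to the suffix `Fin.tail w`. The rotation
`w ↦ w ∘ (· + 1)` is a successor pairing: it sends each arc to one leaving the vertex where the
first one ends. Among all successor pairings, one with a largest cycle `C` through a fixed arc
is cyclic: otherwise connectivity yields an arc in `C` and one outside `C` entering a common
vertex, and composing the pairing with the transposition of these two arcs merges their cycles.
The graph is connected because, with a spare letter available, any injective word is turned
into any other by replacing letters with unused ones; replacing the first letter is a step
forward followed by a step back, and rotations reduce the other positions to the first.
-/

open Equiv Function

theorem Relation.EqvGen.iff_of_forall_rel {α : Type*} {r : α → α → Prop} {P : α → Prop}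
    (hP : ∀ x y, r x y → (P x ↔ P y)) {x y : α} (h : Relation.EqvGen r x y) :
    P x ↔ P y := by
  induction h with
  | rel x y hxy => exact hP x y hxy
  | refl => rfl
  | symm _ _ _ ih => exact ih.symm
  | trans _ _ _ _ _ ih₁ ih₂ => exact ih₁.trans ih₂

namespace Equiv.Perm

variable {α : Type*}

theorem SameCycle.of_apply_eq_of_ne [Finite α] {f g : Perm α} {p y : α}
    (hfg : ∀ z, f.SameCycle p z → z ≠ p → f z = g z) (hy : f.SameCycle p y) :
    g.SameCycle (f p) y := by
  obtain ⟨i, rfl⟩ := (sameCycle_apply_left.mpr hy).exists_nat_pow_eq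
  clear hy
  induction i with
  | zero => rfl
  | succ i ih =>
    rw [pow_succ', mul_apply]
    by_cases hp : (f ^ i) (f p) = p
    · rw [hp]
    · rw [hfg _ (sameCycle_pow_right.mpr (sameCycle_apply_right.mpr .rfl)) hp]
      exact sameCycle_apply_right.mpr ih

theorem sameCycle_mul_swap [Finite α] [DecidableEq α] {σ : Perm α} {p q : α}
    (hpq : ¬σ.SameCycle p q) {y : α} (hy : σ.SameCycle p y) :
    (σ * swap p q).SameCycle p y ∧ (σ * swap p q).SameCycle p (σ q) := by
  have hoff : ∀ z, σ.SameCycle p z → z ≠ p → σ z = (σ * swap p q) z := fun z hz hzp => by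
    rw [mul_apply, swap_apply_of_ne_of_ne hzp (by rintro rfl; exact hpq hz)]
  have hp : (σ * swap p q).SameCycle p (σ p) :=
    (SameCycle.of_apply_eq_of_ne hoff .rfl).symm
  refine ⟨hp.trans (SameCycle.of_apply_eq_of_ne hoff hy), ?_⟩
  exact ⟨1, by simp⟩

theorem exists_forall_sameCycle [Finite α] {V : Type*} (src tgt : α → V) {σ₀ : Perm α}
    (hσ₀ : ∀ x, tgt x = src (σ₀ x))
    (hconn : ∀ x y, Relation.EqvGen (fun x y => tgt x = src y) x y) (a : α) :
    ∃ σ : Perm α, (∀ x, tgt x = src (σ x)) ∧ ∀ y, σ.SameCycle a y := by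
  classical
  have := Fintype.ofFinite α
  obtain ⟨σ, hσ, hmax⟩ := Finset.exists_max_image
    (Finset.univ.filter fun σ : Perm α => ∀ x, tgt x = src (σ x))
    (fun σ => (Finset.univ.filter (σ.SameCycle a)).card) ⟨σ₀, by simpa using hσ₀⟩
  simp only [Finset.mem_filter, Finset.mem_univ, true_and] at hσ hmax
  refine ⟨σ, hσ, fun y => ?_⟩
  by_contra hy
  obtain ⟨x, z, hxz, hxz'⟩ :
      ∃ x z, tgt x = src z ∧ ¬(σ.SameCycle a x ↔ σ.SameCycle a z) := by
    by_contra! H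
    exact hy (((hconn a y).iff_of_forall_rel H).mp .rfl)
  obtain ⟨p, q, hp, hq, hpq⟩ :
      ∃ p q, σ.SameCycle a p ∧ ¬σ.SameCycle a q ∧ tgt p = tgt q := by
    by_cases hx : σ.SameCycle a x
    · exact ⟨x, σ.symm z, hx, by simpa [hx] using hxz', by simp [hxz, hσ]⟩
    · exact ⟨σ.symm z, x, by simpa [hx] using hxz', hx, by simp [hxz, hσ]⟩
  have hτ : ∀ x, tgt x = src ((σ * swap p q) x) := by
    intro x
    rw [mul_apply, swap_apply_def]
    split_ifs with h₁ h₂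
    · rw [h₁, hpq, hσ]
    · rw [h₂, ← hpq, hσ]
    · exact hσ x
  have hcyc : ¬σ.SameCycle p q := fun h => hq (hp.trans h)
  have hlt : (Finset.univ.filter (σ.SameCycle a)).card <
      (Finset.univ.filter ((σ * swap p q).SameCycle a)).card := by
    have hpa := (sameCycle_mul_swap hcyc hp.symm).1
    refine Finset.card_lt_card (Finset.ssubset_iff_of_subset ?_ |>.mpr ⟨σ q, ?_, ?_⟩)
    · intro w hw
      simp only [Finset.mem_filter, Finset.mem_univ, true_and] at hw ⊢
      exact hpa.symm.trans (sameCycle_mul_swap hcyc (hp.symm.trans hw)).1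
    · simpa using hpa.symm.trans (sameCycle_mul_swap hcyc hp.symm).2
    · simpa using hq
  exact (hmax _ hτ).not_gt hlt

theorem exists_zmod_equiv_of_forall_sameCycle [Fintype α] {σ : Perm α} {a : α}
    (hσ : ∀ y, σ.SameCycle a y) {N : ℕ} (hN : Fintype.card α = N) :
    ∃ e : ZMod N ≃ α, ∀ i, e (i + 1) = σ (e i) := by
  classical
  have horb : ∀ y, y ∈ MulAction.orbit (Subgroup.zpowers σ) a := fun y => by
    obtain ⟨i, hi⟩ := hσ y
    exact ⟨⟨σ ^ i, i, rfl⟩, hi⟩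
  have hper : Function.minimalPeriod (σ • ·) a = N := by
    rw [MulAction.minimalPeriod_eq_card, ← hN]
    exact Fintype.card_congr (Equiv.subtypeUnivEquiv horb)
  let e : ZMod N ≃ α := (ZMod.ringEquivCongr hper.symm).toEquiv.trans
    ((MulAction.orbitZPowersEquiv σ a).symm.trans (Equiv.subtypeUnivEquiv horb))
  have he : ∀ j : ℤ, e j = (σ ^ j) a := fun j => by
    simp only [e, Equiv.trans_apply, RingEquiv.toEquiv_eq_coe, RingEquiv.coe_toEquiv, map_intCast,
      MulAction.orbitZPowersEquiv_symm_apply', Equiv.subtypeUnivEquiv_apply]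
    rfl
  refine ⟨e, fun i => ?_⟩
  obtain ⟨j, rfl⟩ := ZMod.intCast_surjective i
  rw [← Int.cast_one, ← Int.cast_add, he, he, add_comm, zpow_one_add, mul_apply]

end Equiv.Perm

theorem exists_eulerian_circuit {α V : Type*} [Fintype α] [Nonempty α] (src tgt : α → V)
    {σ₀ : Perm α} (hσ₀ : ∀ x, tgt x = src (σ₀ x))
    (hconn : ∀ x y, Relation.EqvGen (fun x y => tgt x = src y) x y) {N : ℕ}
    (hN : Fintype.card α = N) : ∃ e : ZMod N ≃ α, ∀ i, tgt (e i) = src (e (i + 1)) := by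
  obtain ⟨σ, hσ, hcyc⟩ :=
    Equiv.Perm.exists_forall_sameCycle src tgt hσ₀ hconn (Classical.arbitrary α)
  obtain ⟨e, he⟩ := Equiv.Perm.exists_zmod_equiv_of_forall_sameCycle hcyc hN
  exact ⟨e, fun i => by rw [he, hσ]⟩

theorem Function.Injective.update_of_forall_ne {α β : Type*} [DecidableEq α] {f : α → β}
    (hf : Injective f) {i : α} {c : β} (hc : ∀ j ≠ i, f j ≠ c) :
    Injective (update f i c) := by
  intro a b hab
  by_cases ha : a = i <;> by_cases hb : b = i <;>
    simp only [ha, hb, update_self, update_of_ne, ne_eq, not_false_eq_true] at hab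
  · exact ha.trans hb.symm
  · exact absurd hab.symm (hc b hb)
  · exact absurd hab (hc a ha)
  · exact hf hab

theorem exists_forall_ne_of_card_lt {α β : Type*} [Fintype α] [Fintype β]
    (h : Fintype.card α < Fintype.card β) (f : α → β) : ∃ z, ∀ j, f j ≠ z := by
  by_contra! hf
  exact (Fintype.card_le_of_surjective f hf).not_gt h

theorem card_filter_injective (n k : ℕ) :
    (Finset.univ.filter fun w : Fin n → Fin k => Injective w).card = k.descFactorial n := by
  rw [← Fintype.card_subtype, Fintype.card_congr (Equiv.subtypeInjectiveEquivEmbedding _ _),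
    Fintype.card_embedding_eq, Fintype.card_fin, Fintype.card_fin]

abbrev InjectiveWord (n k : ℕ) := {w : Fin n → Fin k // Injective w}

namespace InjectiveWord

variable {n k : ℕ}

def precomp (π : Perm (Fin n)) : Perm (InjectiveWord n k) :=
  Equiv.subtypeEquiv (π.symm.arrowCongr (Equiv.refl _)) fun w => (π.injective_comp w).symm

@[simp]
theorem coe_precomp (π : Perm (Fin n)) (x : InjectiveWord n k) : (precomp π x).1 = x.1 ∘ π :=
  rfl

def update (x : InjectiveWord n k) (i : Fin n) (c : Fin k) (hc : ∀ j ≠ i, x.1 j ≠ c) :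
    InjectiveWord n k :=
  ⟨Function.update x.1 i c, x.2.update_of_forall_ne hc⟩

variable {m : ℕ}

def Follows (x y : InjectiveWord (m + 1) k) : Prop :=
  Fin.tail x.1 = Fin.init y.1

theorem follows_precomp_addRight_one (x : InjectiveWord (m + 1) k) :
    Follows x (precomp (Equiv.addRight 1) x) :=
  funext fun l => by simp [Fin.tail, Fin.init, Fin.coeSucc_eq_succ]

theorem eqvGen_precomp_addRight (x : InjectiveWord (m + 1) k) (i : Fin (m + 1)) :
    Relation.EqvGen Follows x (precomp (Equiv.addRight i) x) := by
  induction i using Fin.induction with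
  | zero => convert Relation.EqvGen.refl x; ext; simp
  | succ i ih =>
    refine ih.trans _ _ _ (.rel _ _ ?_)
    rw [Follows, follows_precomp_addRight_one]
    ext l
    simp only [Fin.init, Function.comp_apply, coe_precomp, Equiv.coe_addRight,
      ← Fin.coeSucc_eq_succ]
    rw [add_right_comm, add_assoc]

theorem eqvGen_update_zero (x : InjectiveWord (m + 1) k) (c : Fin k)
    (hc : ∀ j ≠ 0, x.1 j ≠ c) : Relation.EqvGen Follows x (x.update 0 c hc) := by
  refine (Relation.EqvGen.rel _ _ (follows_precomp_addRight_one x)).trans _ _ _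
    (.symm _ _ (.rel _ _ ?_))
  rw [Follows, update, Fin.tail_update_zero]
  exact follows_precomp_addRight_one x

theorem eqvGen_update (x : InjectiveWord (m + 1) k) (i : Fin (m + 1)) (c : Fin k)
    (hc : ∀ j ≠ i, x.1 j ≠ c) : Relation.EqvGen Follows x (x.update i c hc) := by
  have hc' : ∀ j ≠ 0, (precomp (Equiv.addRight i) x).1 j ≠ c := fun j hj =>
    hc _ (by simpa using hj)
  have hcomm : (precomp (Equiv.addRight i) x).update 0 c hc' =
      precomp (Equiv.addRight i) (x.update i c hc) := by
    ext1
    simp only [update, coe_precomp, Function.update_comp_equiv, Equiv.addRight_symm_apply,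
      add_neg_cancel]
  exact (eqvGen_precomp_addRight x i).trans _ _ _ ((eqvGen_update_zero _ c hc').trans _ _ _
    (hcomm ▸ (eqvGen_precomp_addRight _ i).symm))

theorem exists_eqvGen_apply_eq (hk : m + 1 < k) (x y : InjectiveWord (m + 1) k)
    (i : Fin (m + 1)) :
    ∃ x', Relation.EqvGen Follows x x' ∧ x'.1 i = y.1 i ∧
      ∀ j, x.1 j = y.1 j → x'.1 j = y.1 j := by
  by_cases hfree : ∀ j ≠ i, x.1 j ≠ y.1 i
  · refine ⟨x.update i _ hfree, eqvGen_update x i _ hfree, by simp [update], fun j hj => ?_⟩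
    by_cases hji : j = i
    · subst hji; simp [update]
    · simpa [update, hji] using hj
  push Not at hfree
  obtain ⟨l, hli, hl⟩ := hfree
  -- `y i` already occurs at position `l`: overwrite it there with a spare letter first.
  obtain ⟨z, hz⟩ := exists_forall_ne_of_card_lt (by simpa using hk) x.1
  set x₁ := x.update l z fun j _ => hz j
  have h₁ : ∀ j ≠ i, x₁.1 j ≠ y.1 i := fun j _ => by
    by_cases hjl : j = l
    · simpa [x₁, update, hjl, ← hl] using (hz l).symm
    · simpa [x₁, update, hjl, ← hl] using x.2.ne hjl
  refine ⟨x₁.update i _ h₁, (eqvGen_update _ _ _ _).trans _ _ _ (eqvGen_update _ _ _ _),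
    by simp [update], fun j hj => ?_⟩
  have hjl : j ≠ l := by
    rintro rfl
    exact hli (y.2 (hj.symm.trans hl))
  by_cases hji : j = i
  · subst hji; simp [update]
  · simpa [x₁, update, hji, hjl] using hj

theorem eqvGen_follows (hk : m + 1 < k) (x y : InjectiveWord (m + 1) k) :
    Relation.EqvGen Follows x y := by
  induction hd : (Finset.univ.filter fun j => x.1 j ≠ y.1 j).card using Nat.strong_induction_on
    generalizing x with
  | _ d ih =>
  by_cases hxy : x = y
  · exact hxy ▸ .refl x
  obtain ⟨i, hi⟩ : ∃ i, x.1 i ≠ y.1 i := by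
    by_contra! h
    exact hxy (Subtype.ext (funext h))
  obtain ⟨x', hxx', hi', hagree⟩ := exists_eqvGen_apply_eq hk x y i
  refine hxx'.trans _ _ _ (ih _ ?_ x' rfl)
  rw [← hd]
  refine Finset.card_lt_card (Finset.ssubset_iff_of_subset (fun j => ?_) |>.mpr
    ⟨i, by simpa using hi, by simpa using hi'⟩)
  simpa using mt (hagree j)

end InjectiveWord

theorem periodic_of_injective_window {N n : ℕ} {s : ZMod N → Fin n}
    (hs : ∀ i, Injective fun j : Fin n => s (i + (j : ℕ))) : Periodic s n := by
  intro i
  obtain ⟨j, hj⟩ := Finite.injective_iff_surjective.mp (hs i) (s (i + n))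
  obtain ⟨_ | j, hj'⟩ := j
  · simpa using hj.symm
  have hjn : (⟨j, by omega⟩ : Fin n) = ⟨n - 1, by omega⟩ := hs (i + 1) <| by
    change s (i + 1 + (j : ℕ)) = s (i + 1 + ((n - 1 : ℕ) : ZMod N))
    rw [Nat.cast_pred (by omega), add_assoc, add_assoc, add_sub_cancel, add_comm 1]
    exact_mod_cast hj
  simp at hjn
  omega

theorem IsUCycle.card_dvd_of_periodic {n k : ℕ} {S : Finset (Fin n → Fin k)}
    {s : ZMod S.card → Fin k} (hs : IsUCycle S s) {p : ℕ}
    (hp : Periodic s (p : ZMod S.card)) : S.card ∣ p := by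
  have := hs.injOn (Set.mem_univ (p : ZMod S.card)) (Set.mem_univ 0)
    (funext fun j => by simp only [zero_add]; rw [add_comm, hp])
  exact (ZMod.natCast_eq_zero_iff _ _).mp this

theorem lt_of_isUCycle_injective {n k : ℕ} (hk : 3 ≤ k)
    {s : ZMod (Finset.univ.filter fun w : Fin n → Fin k => Injective w).card → Fin k}
    (hs : IsUCycle (Finset.univ.filter fun w : Fin n → Fin k => Injective w) s) : n < k := by
  have hwin : ∀ i, Injective fun j : Fin n => s (i + (j : ℕ)) := fun i => by
    simpa using hs.mapsTo (Set.mem_univ i)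
  have hnk : n ≤ k := by simpa using Fintype.card_le_of_injective _ (hwin 0)
  refine hnk.lt_of_ne fun hnk => ?_
  subst hnk
  have hdvd := hs.card_dvd_of_periodic (periodic_of_injective_window hwin)
  rw [card_filter_injective, Nat.descFactorial_self] at hdvd
  exact (Nat.le_of_dvd (by omega) hdvd).not_gt (Nat.lt_factorial_self hk)

theorem isUCycle_of_tail_eq_init {m k : ℕ} {S : Finset (Fin (m + 1) → Fin k)}
    {e : ZMod S.card → Fin (m + 1) → Fin k} (he : Set.BijOn e Set.univ S)
    (hstep : ∀ i, Fin.tail (e i) = Fin.init (e (i + 1))) : IsUCycle S fun i => e i 0 := by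
  have hwin : ∀ j : Fin (m + 1), ∀ i, e (i + (j : ℕ)) 0 = e i j := by
    intro j
    induction j using Fin.induction with
    | zero => simp
    | succ j ih =>
      intro i
      change _ = Fin.tail (e i) j
      rw [hstep, Fin.init, ← ih, add_assoc]
      congr 3
      simp [add_comm]
  unfold IsUCycle
  convert he using 1
  funext i j
  exact hwin j i

theorem exists_isUCycle_injective {m k : ℕ} (hk : m + 1 < k) :
    ∃ s, IsUCycle (Finset.univ.filter fun w : Fin (m + 1) → Fin k => Injective w) s := by
  have : Nonempty (InjectiveWord (m + 1) k) := ⟨⟨Fin.castLE hk.le, Fin.castLE_injective _⟩⟩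
  obtain ⟨e, he⟩ := exists_eulerian_circuit
    (fun x : InjectiveWord (m + 1) k => Fin.init x.1) (fun x => Fin.tail x.1)
    InjectiveWord.follows_precomp_addRight_one (InjectiveWord.eqvGen_follows hk)
    (Fintype.card_subtype _)
  refine ⟨_, isUCycle_of_tail_eq_init (e := fun i => (e i).1) ⟨?_, ?_, ?_⟩ he⟩
  · exact fun i _ => by simp
  · exact fun i _ j _ hij => e.injective (Subtype.ext hij)
  · exact fun w hw => ⟨e.symm ⟨w, by simpa using hw⟩, trivial, by simp⟩

/-- Jackson's theorem: for `k ≥ 3` and `n ≥ 1`, a U-cycle for the injective `n`-letter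
words over a `k`-letter alphabet exists if and only if `k > n`. -/
theorem exists_ucycle_injective_iff (n k : ℕ) (hk : 3 ≤ k) (hn : 1 ≤ n) :
    (∃ s : ZMod (Finset.univ.filter
        (fun w : Fin n → Fin k => Function.Injective w)).card → Fin k,
      IsUCycle (Finset.univ.filter (fun w : Fin n → Fin k => Function.Injective w)) s) ↔
    k > n := by
  refine ⟨fun ⟨_, hs⟩ => lt_of_isUCycle_injective hk hs, fun hnk => ?_⟩
  obtain ⟨m, rfl⟩ := Nat.exists_eq_add_of_le' hn
  exact exists_isUCycle_injective hnk
end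

section
/- Let k ≥ 3 and n ≥ 1. A U-cycle for the set of surjective words of length n over a k-letter alphabet (onto functions from Fin n to Fin k, i.e., n-letter words containing every letter of the alphabet) exists if and only if n > k. -/
/-!
Join two surjective words by an edge `e → f` when the last `n - 1` letters of `e` are the first
`n - 1` letters of `f`; a U-cycle is a Hamiltonian cycle of this digraph. The edge relation only
compares a suffix with a prefix, so it is rectangular: `a → c`, `a → d`, `b → c` give `b → d`.
Rotation by one letter is a permutation along edges, and for `n > k` the digraph is strongly
connected: a single-letter change is a walk through rotations, and any two surjective words are
joined by single-letter changes through surjective words. Swapping successors then merges the cycles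
of the rotation into one. For `n = k` every window is a permutation, which forces the U-cycle to
have period `k`, while there are `k! > k` windows.
-/

open Function Equiv Relation Finset

namespace Equiv.Perm

variable {X : Type*} [DecidableEq X] {σ : Perm X} {a b x : X}

theorem SameCycle.mul_swap_of_not_sameCycle [Finite X] (hxa : σ.SameCycle x a)
    (hxb : ¬σ.SameCycle x b) : (σ * swap a b).SameCycle x a := by
  have hex := hxa.exists_nat_pow_eq
  have hagree : ∀ i ≤ Nat.find hex, ((σ * swap a b) ^ i) x = (σ ^ i) x := by
    intro i hi
    induction i with
    | zero => rfl
    | succ i ih =>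
      have hia : (σ ^ i) x ≠ a := Nat.find_min hex (by omega)
      have hib : (σ ^ i) x ≠ b := fun h => hxb (h ▸ sameCycle_pow_right.2 (.refl _ _))
      rw [pow_succ', Perm.mul_apply, ih (by omega), Perm.mul_apply, swap_apply_of_ne_of_ne hia hib,
        pow_succ', Perm.mul_apply]
  exact ⟨Nat.find hex, by rw [zpow_natCast, hagree _ le_rfl, Nat.find_spec hex]⟩

theorem sameCycle_mul_swap_of_not_sameCycle_s2 [Finite X] (hab : ¬σ.SameCycle a b) {z : X}
    (hz : σ.SameCycle a z ∨ σ.SameCycle b z) : (σ * swap a b).SameCycle a z := by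
  rcases hz with hz | hz
  · exact (hz.symm.mul_swap_of_not_sameCycle fun h => hab (hz.trans h)).symm
  have hb : ∀ y, σ.SameCycle b y → (σ * swap a b).SameCycle y b := fun y hy => by
    rw [swap_comm]
    exact hy.symm.mul_swap_of_not_sameCycle fun h => hab (hy.trans h).symm
  have hab' : (σ * swap a b).SameCycle a (σ b) := by
    have : (σ * swap a b) a = σ b := by rw [Perm.mul_apply, swap_apply_left]
    exact this ▸ sameCycle_apply_right.2 (.refl _ _)
  exact hab'.trans ((hb _ (sameCycle_apply_right.2 (.refl _ _))).trans (hb z hz).symm)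

end Equiv.Perm

theorem Equiv.Perm.exists_bijective_zmod_card {X : Type*} [Fintype X] (σ : Perm X) (x : X)
    (hx : ∀ y, σ.SameCycle x y) :
    ∃ f : ZMod (Fintype.card X) → X, Bijective f ∧ ∀ i, f (i + 1) = σ (f i) := by
  set p := minimalPeriod σ x
  have : NeZero p := ⟨(minimalPeriod_pos_of_mem_periodicPts (σ.injective.mem_periodicPts x)).ne'⟩
  let f : ZMod p → X := fun i => (σ ^ i.val) x
  have hf : ∀ n : ℕ, f n = (σ ^ n) x := fun n => by
    simp only [f, ZMod.val_natCast, ← Perm.iterate_eq_pow, p, iterate_mod_minimalPeriod_eq]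
  have hbij : Bijective f := by
    refine ⟨fun i j hij => ZMod.val_injective p ?_, fun y => ?_⟩
    · refine iterate_injOn_Iio_minimalPeriod (ZMod.val_lt i) (ZMod.val_lt j) ?_
      simpa [f, Perm.iterate_eq_pow] using hij
    · obtain ⟨n, hn⟩ := (hx y).exists_nat_pow_eq
      exact ⟨n, (hf n).trans hn⟩
  have hcard : Fintype.card X = p := by rw [← Fintype.card_of_bijective hbij, ZMod.card]
  rw [hcard]
  refine ⟨f, hbij, fun i => ?_⟩
  rw [← ZMod.natCast_zmod_val i, ← Nat.cast_succ, hf, hf, pow_succ', Perm.mul_apply]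

open Equiv.Perm in
/-- Swapping the successors of an edge `e → g` that leaves the cycle of `x₀` merges two cycles,
and the rectangle property of `R` keeps every step an edge. -/
theorem exists_perm_rel_apply_sameCycle {X : Type*} [Fintype X] {R : X → X → Prop}
    (hR : ∀ a b c d, R a c → R a d → R b c → R b d) (σ₀ : Perm X) (hσ₀ : ∀ x, R x (σ₀ x))
    (hconn : ∀ x y, ReflTransGen R x y) (x₀ : X) :
    ∃ σ : Perm X, (∀ x, R x (σ x)) ∧ ∀ y, σ.SameCycle x₀ y := by
  classical
  obtain ⟨σ, hσ, hmax⟩ := exists_max_image (univ.filter fun σ : Perm X => ∀ x, R x (σ x))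
    (fun σ => #(univ.filter (σ.SameCycle x₀))) ⟨σ₀, by simpa using hσ₀⟩
  replace hσ : ∀ x, R x (σ x) := (mem_filter.1 hσ).2
  refine ⟨σ, hσ, fun y => by_contra fun hy => ?_⟩
  obtain ⟨e, g, he, hg, heg⟩ : ∃ e g, σ.SameCycle x₀ e ∧ ¬σ.SameCycle x₀ g ∧ R e g := by
    by_contra! hclosed
    suffices ∀ z, ReflTransGen R x₀ z → σ.SameCycle x₀ z from hy (this y (hconn x₀ y))
    intro z hz
    induction hz with
    | refl => exact .refl _ _
    | tail _ hcz ih => exact by_contra fun h => hclosed _ _ ih h hcz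
  set b := σ⁻¹ g
  have hbg : σ b = g := σ.apply_symm_apply g
  have hb : σ.SameCycle b g := hbg ▸ sameCycle_apply_right.2 (.refl _ _)
  have heb : ¬σ.SameCycle e b := fun h => hg (he.trans (h.trans hb))
  have hτ : ∀ x, R x ((σ * Equiv.swap e b) x) := by
    intro x
    by_cases hxe : x = e
    · rw [hxe, Perm.mul_apply, swap_apply_left, hbg]
      exact heg
    by_cases hxb : x = b
    · rw [hxb, Perm.mul_apply, swap_apply_right]
      exact hR e b g (σ e) heg (hσ e) (hbg ▸ hσ b)
    · rw [Perm.mul_apply, swap_apply_of_ne_of_ne hxe hxb]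
      exact hσ x
  have hmerge := fun z hz => sameCycle_mul_swap_of_not_sameCycle_s2 (z := z) heb hz
  have hx₀ := (hmerge x₀ (.inl he.symm)).symm
  have hgrow : univ.filter (σ.SameCycle x₀) ⊂ univ.filter ((σ * Equiv.swap e b).SameCycle x₀) := by
    refine (ssubset_iff_of_subset fun z hz => ?_).2 ⟨g, ?_, ?_⟩
    · simp only [mem_filter, mem_univ, true_and] at hz ⊢
      exact hx₀.trans (hmerge z (.inl (he.symm.trans hz)))
    · simpa using hx₀.trans (hmerge g (.inr hb))
    · simpa using hg
  exact (hmax _ (mem_filter.2 ⟨mem_univ _, hτ⟩)).not_gt (card_lt_card hgrow)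

theorem Function.Surjective.update_of_apply_eq {ι α : Type*} [DecidableEq ι] {w : ι → α}
    (hw : Surjective w) {p j : ι} (hjp : j ≠ p) (hj : w j = w p) (a : α) :
    Surjective (update w p a) := by
  intro c
  obtain ⟨i, rfl⟩ := hw c
  by_cases hi : i = p
  · exact ⟨j, by rw [update_of_ne hjp, hj, hi]⟩
  · exact ⟨i, update_of_ne hi _ _⟩

section Hamming

variable {ι β : Type*} [Fintype ι] [DecidableEq ι] [DecidableEq β]

theorem hammingDist_update_lt {w v : ι → β} {p : ι} (hp : w p ≠ v p) :
    hammingDist (update w p (v p)) v < hammingDist w v := by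
  refine card_lt_card ((ssubset_iff_of_subset fun i => ?_).2 ⟨p, by simpa using hp, by simp⟩)
  by_cases hi : i = p <;> simp [hi]

theorem hammingDist_update_le_one (w : ι → β) (p : ι) (a : β) :
    hammingDist (update w p a) w ≤ 1 :=
  (card_le_card fun i => by by_cases hi : i = p <;> simp [hi]).trans (card_singleton p).le

end Hamming

section SurjectiveWords

variable {ι α : Type*} [Fintype ι] [DecidableEq ι] [DecidableEq α]
  {r : {w : ι → α // Surjective w} → {w : ι → α // Surjective w} → Prop}

theorem exists_reflTransGen_hammingDist_lt_of_apply_eq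
    (hr : ∀ (x y : {w : ι → α // Surjective w}) (p : ι), (∀ j ≠ p, x.1 j = y.1 j) →
      ReflTransGen r x y)
    {x v : {w : ι → α // Surjective w}} {p j : ι} (hp : x.1 p ≠ v.1 p) (hjp : j ≠ p)
    (hj : x.1 j = x.1 p) :
    ∃ y, ReflTransGen r x y ∧ hammingDist y.1 v.1 < hammingDist x.1 v.1 :=
  ⟨⟨_, x.2.update_of_apply_eq hjp hj (v.1 p)⟩, hr _ _ p fun _ hi => (update_of_ne hi _ _).symm,
    hammingDist_update_lt hp⟩

theorem exists_reflTransGen_hammingDist_lt [Fintype α] (hcard : Fintype.card α < Fintype.card ι)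
    (hr : ∀ (x y : {w : ι → α // Surjective w}) (p : ι), (∀ j ≠ p, x.1 j = y.1 j) →
      ReflTransGen r x y)
    {x v : {w : ι → α // Surjective w}} (hxv : x ≠ v) :
    ∃ y, ReflTransGen r x y ∧ hammingDist y.1 v.1 < hammingDist x.1 v.1 := by
  by_cases hrep : ∃ p j, x.1 p ≠ v.1 p ∧ j ≠ p ∧ x.1 j = x.1 p
  · obtain ⟨p, j, hp, hjp, hj⟩ := hrep
    exact exists_reflTransGen_hammingDist_lt_of_apply_eq hr hp hjp hj
  push Not at hrep
  -- Now every wrong letter of `x` occurs only once in `x`. Copy the wrong letter `x q` into a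
  -- position `s` holding a repeated letter and correct `q` to `x p`: then `p` is a wrong position
  -- whose letter is repeated.
  obtain ⟨p, hp⟩ : ∃ p, x.1 p ≠ v.1 p := not_forall.1 fun h => hxv (Subtype.ext (funext h))
  obtain ⟨q, hq⟩ := v.2 (x.1 p)
  have hqp : q ≠ p := by rintro rfl; exact hp hq.symm
  have hxq : x.1 q ≠ v.1 q := fun h => hrep p q hp hqp (h.trans hq)
  obtain ⟨s, s', hss', hxs⟩ := Fintype.exists_ne_map_eq_of_card_lt x.1 hcard
  have hvs : x.1 s = v.1 s := not_not.1 fun h => hrep s s' h hss'.symm hxs.symm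
  have hsq : s ≠ q := by rintro rfl; exact hxq hvs
  have hsp : s ≠ p := by rintro rfl; exact hp hvs
  let y : {w : ι → α // Surjective w} := ⟨_, x.2.update_of_apply_eq hss'.symm hxs.symm (x.1 q)⟩
  have hyq : y.1 s = y.1 q := by simp [y, update_of_ne hsq.symm]
  let z : {w : ι → α // Surjective w} := ⟨_, y.2.update_of_apply_eq hsq hyq (v.1 q)⟩
  have hzp : z.1 p = x.1 p := by simp [z, y, update_of_ne hqp.symm, update_of_ne hsp.symm]
  obtain ⟨w, hzw, hw⟩ := exists_reflTransGen_hammingDist_lt_of_apply_eq hr (x := z) (v := v)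
    (hzp ▸ hp) hqp (by rw [hzp]; simp [z, hq])
  have hxz : ReflTransGen r x z :=
    (hr x y s fun _ hi => (update_of_ne hi _ _).symm).trans
      (hr y z q fun _ hi => (update_of_ne hi _ _).symm)
  refine ⟨w, hxz.trans hzw, hw.trans_le ?_⟩
  have hz : z.1 = update (update x.1 q (v.1 q)) s (x.1 q) := update_comm hsq _ _ _
  calc hammingDist z.1 v.1
      ≤ hammingDist z.1 (update x.1 q (v.1 q)) + hammingDist (update x.1 q (v.1 q)) v.1 :=
        hammingDist_triangle _ _ _
    _ ≤ 1 + hammingDist (update x.1 q (v.1 q)) v.1 := by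
        rw [hz]; gcongr; exact hammingDist_update_le_one _ _ _
    _ ≤ hammingDist x.1 v.1 := by have := hammingDist_update_lt hxq; omega

theorem reflTransGen_of_card_lt [Fintype α] (hcard : Fintype.card α < Fintype.card ι)
    (hr : ∀ (x y : {w : ι → α // Surjective w}) (p : ι), (∀ j ≠ p, x.1 j = y.1 j) →
      ReflTransGen r x y)
    (x y : {w : ι → α // Surjective w}) : ReflTransGen r x y := by
  induction h : hammingDist x.1 y.1 using Nat.strong_induction_on generalizing x with
  | _ d ih =>
    rcases eq_or_ne x y with rfl | hxy
    · exact .refl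
    obtain ⟨w, hxw, hw⟩ := exists_reflTransGen_hammingDist_lt hcard hr hxy
    exact hxw.trans (ih _ (h ▸ hw) w rfl)

end SurjectiveWords

section Words

variable {m k : ℕ}

def Shifts (e f : Fin (m + 1) → Fin k) : Prop := Fin.tail e = Fin.init f

theorem Shifts.rect {a b c d : Fin (m + 1) → Fin k} (hac : Shifts a c) (had : Shifts a d)
    (hbc : Shifts b c) : Shifts b d :=
  hbc.trans (hac.symm.trans had)

theorem isUCycle_of_shifts {S : Finset (Fin (m + 1) → Fin k)}
    (f : ZMod S.card → Fin (m + 1) → Fin k) (hf : Set.BijOn f Set.univ S)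
    (hshift : ∀ i, Shifts (f i) (f (i + 1))) : IsUCycle S fun i => f i 0 := by
  have hwindow : ∀ (j : ℕ) (hj : j < m + 1) (i : ZMod S.card), f (i + j) 0 = f i ⟨j, hj⟩ := by
    intro j
    induction j with
    | zero => intro _ i; simp
    | succ j ih =>
      intro hj i
      rw [Nat.cast_succ, add_comm (j : ZMod S.card), ← add_assoc, ih (by omega)]
      exact (congrFun (hshift i) ⟨j, by omega⟩).symm
  exact hf.congr fun i _ => funext fun j => (hwindow j j.2 i).symm

abbrev SurjWord (m k : ℕ) := {w : Fin (m + 1) → Fin k // Surjective w}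

namespace SurjWord

def rotate (x : SurjWord m k) (c : Fin (m + 1)) : SurjWord m k :=
  ⟨x.1 ∘ (· + c), x.2.comp (add_right_surjective c)⟩

@[simp]
theorem rotate_zero (x : SurjWord m k) : x.rotate 0 = x := by
  ext j; simp [rotate]

@[simp]
theorem rotate_rotate (x : SurjWord m k) (c d : Fin (m + 1)) :
    (x.rotate c).rotate d = x.rotate (c + d) := by
  ext j; simp [rotate, add_assoc, add_comm d]

theorem shifts_rotate_one (x : SurjWord m k) : Shifts x.1 (x.rotate 1).1 :=
  funext fun i => by simp [Fin.tail, Fin.init, rotate, Fin.coeSucc_eq_succ]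

def rotatePerm : Perm (SurjWord m k) where
  toFun x := x.rotate 1
  invFun x := x.rotate (-1)
  left_inv x := by simp
  right_inv x := by simp

theorem reflTransGen_rotate (x : SurjWord m k) (c : Fin (m + 1)) :
    ReflTransGen (Shifts on Subtype.val) x (x.rotate c) := by
  induction c using Fin.induction with
  | zero => simpa using .refl
  | succ c ih =>
    rw [← Fin.coeSucc_eq_succ, ← rotate_rotate]
    exact ih.tail (shifts_rotate_one _)

/-- Rotating `x` so that `p` comes first, one shift replaces the letter at `p` by that of `y`;
rotating back gives `y`. -/
theorem reflTransGen_of_forall_ne_eq (x y : SurjWord m k) (p : Fin (m + 1))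
    (h : ∀ j ≠ p, x.1 j = y.1 j) : ReflTransGen (Shifts on Subtype.val) x y := by
  have hstep : Shifts (x.rotate p).1 (y.rotate (p + 1)).1 := funext fun i => by
    have : i.castSucc + (p + 1) = i.succ + p := by rw [add_comm p, ← add_assoc, Fin.coeSucc_eq_succ]
    simpa [Fin.tail, Fin.init, rotate, this] using h _ (by simp)
  have hback := reflTransGen_rotate (y.rotate (p + 1)) (-(p + 1))
  rw [rotate_rotate, add_neg_cancel, rotate_zero] at hback
  exact ((reflTransGen_rotate x p).tail hstep).trans hback

end SurjWord

end Words

theorem IsUCycle.nonempty {n k : ℕ} {S : Finset (Fin n → Fin k)} {s : ZMod S.card → Fin k}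
    (hs : IsUCycle S s) : S.Nonempty :=
  ⟨_, hs.mapsTo (Set.mem_univ 0)⟩

/-- Each window is a permutation, so the letter following a window is the one leaving it:
`s` has period `k`, and the window map can only be injective if `S.card ∣ k`. -/
theorem IsUCycle.card_dvd {k : ℕ} {S : Finset (Fin k → Fin k)} {s : ZMod S.card → Fin k}
    (hS : ∀ w ∈ S, Surjective w) (hs : IsUCycle S s) : S.card ∣ k := by
  have hwin : ∀ i : ZMod S.card, Bijective fun j : Fin k => s (i + (j : ℕ)) := fun i =>
    Finite.injective_iff_bijective.1 <| Finite.injective_iff_surjective.2 <|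
      hS _ (hs.mapsTo (Set.mem_univ i))
  have hper : ∀ i, s (i + k) = s i := by
    intro i
    obtain ⟨j, hj⟩ := (hwin (i + 1)).2 (s i)
    have hjk : (j : ℕ) + 1 = k := by
      by_contra hne
      have := @(hwin i).1 ⟨j + 1, by omega⟩ ⟨0, by omega⟩
        (by simpa [add_assoc, add_comm (1 : ZMod S.card)] using hj)
      simp at this
    simpa [← hjk, add_assoc, add_comm (1 : ZMod S.card)] using hj
  have hk0 : ((k : ℕ) : ZMod S.card) = 0 := by
    simpa using hs.injOn (Set.mem_univ ((0 : ZMod S.card) + k)) (Set.mem_univ 0)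
      (funext fun j => by rw [zero_add, zero_add, add_comm]; exact hper _)
  exact (ZMod.natCast_eq_zero_iff k S.card).1 hk0

theorem lt_card_filter_surjective {k : ℕ} (hk : 3 ≤ k) :
    k < #(univ.filter fun w : Fin k → Fin k => Surjective w) :=
  calc k < k.factorial := Nat.lt_factorial_self hk
    _ = Fintype.card (Perm (Fin k)) := by simp [Fintype.card_perm]
    _ ≤ _ := by
      rw [← Fintype.card_subtype]
      exact Fintype.card_le_of_injective (fun σ => ⟨σ, σ.surjective⟩)
        fun σ τ h => Equiv.ext (congrFun (congrArg Subtype.val h))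

theorem exists_isUCycle_filter_surjective {m k : ℕ} (hk : 0 < k) (hkm : k ≤ m) :
    ∃ s, IsUCycle (univ.filter fun w : Fin (m + 1) → Fin k => Surjective w) s := by
  have : Nonempty (Fin k) := ⟨⟨0, hk⟩⟩
  let x₀ : SurjWord m k :=
    ⟨invFun (Fin.castLE (by omega : k ≤ m + 1)), invFun_surjective (Fin.castLE_injective _)⟩
  obtain ⟨σ, hσ, hcyc⟩ := exists_perm_rel_apply_sameCycle (R := Shifts on Subtype.val)
    (fun _ _ _ _ => Shifts.rect) SurjWord.rotatePerm SurjWord.shifts_rotate_one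
    (reflTransGen_of_card_lt (by simpa using hkm) SurjWord.reflTransGen_of_forall_ne_eq) x₀
  have henum := σ.exists_bijective_zmod_card x₀ hcyc
  rw [Fintype.card_subtype] at henum
  obtain ⟨f, hf, hfσ⟩ := henum
  refine ⟨_, isUCycle_of_shifts (fun i => (f i).1) ⟨fun i _ => by simp,
    fun i _ j _ h => hf.1 (Subtype.ext h), fun w hw => ?_⟩ fun i => hfσ i ▸ hσ (f i)⟩
  obtain ⟨i, hi⟩ := hf.2 ⟨w, by simpa using hw⟩
  exact ⟨i, Set.mem_univ i, congrArg Subtype.val hi⟩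

theorem exists_ucycle_surjective_iff_general (n k : ℕ) (hk : 3 ≤ k) :
    (∃ s : ZMod (Finset.univ.filter
        (fun w : Fin n → Fin k => Function.Surjective w)).card → Fin k,
      IsUCycle (Finset.univ.filter (fun w : Fin n → Fin k => Function.Surjective w)) s) ↔
    n > k := by
  refine ⟨fun ⟨s, hs⟩ => ?_, fun hkn => ?_⟩
  · obtain ⟨w, hw⟩ := hs.nonempty
    have hkn : k ≤ n := by simpa using Fintype.card_le_of_surjective w (mem_filter.1 hw).2
    refine hkn.lt_of_ne fun hnk => ?_
    subst hnk
    exact (lt_card_filter_surjective hk).not_ge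
      (Nat.le_of_dvd (by omega) (hs.card_dvd fun w hw => (mem_filter.1 hw).2))
  · obtain ⟨m, rfl⟩ : ∃ m, n = m + 1 := ⟨n - 1, by omega⟩
    exact exists_isUCycle_filter_surjective (by omega) (by omega)

/-- For `k ≥ 3` and `n ≥ 1`, a U-cycle for the surjective `n`-letter words over a
`k`-letter alphabet exists if and only if `n > k`. -/
theorem exists_ucycle_surjective_iff (n k : ℕ) (hk : 3 ≤ k) (hn : 1 ≤ n) :
    (∃ s : ZMod (Finset.univ.filter
        (fun w : Fin n → Fin k => Function.Surjective w)).card → Fin k,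
      IsUCycle (Finset.univ.filter (fun w : Fin n → Fin k => Function.Surjective w)) s) ↔
    n > k :=
  exists_ucycle_surjective_iff_general n k hk
end

section
/- For all n and k with n ≥ k > 2 there exists a U-cycle for the set of non-surjective words of length n over a k-letter alphabet, i.e., the set of functions from Fin n to Fin k that are not surjective (n-letter words with at least one letter of the alphabet missing). -/
/-!
Reading off the first letters along a Hamiltonian cycle of the de Bruijn graph on `S` (with
`u → v` when the last `n - 1` letters of `u` are the first `n - 1` letters of `v`) gives a U-cycle
for `S`. The non-surjective words form a union of rotation classes, and each rotation class is a
cycle of the de Bruijn graph, since `w → w ∘ finRotate n`. These cycles are joined one at a time.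
From any non-surjective word there is a path of non-surjective words to a constant word `c`:
shift in `c`'s, or, if the word misses `c`, first shift in a second letter `d`; the constant
word `d` misses a third letter, which is where `k > 2` is needed. Such a path has an edge `x → y`
entering the current cycle from outside, and as `x → y` and `x → x ∘ finRotate n`, the rotation
class of `x` can be spliced into the cycle just before `y`.
-/

open Function Relation

theorem Relation.ReflTransGen.exists_crossing {α : Type*} {R : α → α → Prop} {p : α → Prop}
    {a b : α} (h : ReflTransGen R a b) (ha : ¬ p a) (hb : p b) :
    ∃ x y, R x y ∧ ¬ p x ∧ p y := by
  by_contra! hR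
  induction h with
  | refl => exact ha hb
  | tail _ hcd ih => exact ih (by_contra fun hc => hR _ _ hcd hc hb)

theorem List.exists_isRotated_cons_of_mem {α : Type*} {l : List α} {a : α} (h : a ∈ l) :
    ∃ t, l ~r a :: t := by
  obtain ⟨s, t, rfl⟩ := List.append_of_mem h
  exact ⟨t ++ s, List.isRotated_append⟩

namespace Cycle

variable {α : Type*} {r : α → α → Prop}

-- `hr` holds in any line digraph, such as a de Bruijn graph: two vertices with a common
-- successor have the same successors.
theorem chain_splice (hr : ∀ a b x y, r a y → r x y → r x b → r a b) {x y : α}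
    {l m : List α} (hl : Chain r (y :: l : List α)) (hm : Chain r (x :: m : List α))
    (hxy : r x y) : Chain r (y :: (l ++ (m ++ [x])) : List α) := by
  obtain ⟨hyl, -, hlast⟩ := List.isChain_append.1 (show List.IsChain r ((y :: l) ++ [y]) from hl)
  obtain ⟨-, hmx, hhead⟩ := List.isChain_append.1 (show List.IsChain r ([x] ++ (m ++ [x])) from hm)
  have hmxy : List.IsChain r ((m ++ [x]) ++ [y]) :=
    hmx.append (List.isChain_singleton y) (by simpa using hxy)
  rw [chain_coe_cons, List.append_assoc]
  refine List.IsChain.append (l₁ := y :: l) hyl hmxy fun p hp q hq => ?_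
  simp only [Option.mem_def, List.head?_cons, Option.some.injEq, forall_eq',
    List.getLast?_singleton, List.head?_append, Option.or_some] at hlast hhead hq
  exact hr p q x y (hlast p hp) hxy (hq ▸ hhead)

theorem exists_chain_perm_append (hr : ∀ a b x y, r a y → r x y → r x b → r a b)
    {L M : List α} {x y : α} (hL : Chain r L) (hM : Chain r M) (hy : y ∈ L) (hx : x ∈ M)
    (hxy : r x y) : ∃ N : List α, Chain r N ∧ N.Perm (L ++ M) := by
  obtain ⟨l, hl⟩ := List.exists_isRotated_cons_of_mem hy
  obtain ⟨m, hm⟩ := List.exists_isRotated_cons_of_mem hx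
  rw [coe_eq_coe.2 hl] at hL
  rw [coe_eq_coe.2 hm] at hM
  refine ⟨_, chain_splice hr hL hM hxy, ?_⟩
  have hm' : (m ++ [x]).Perm M := (List.perm_append_singleton x m).trans hm.perm.symm
  simpa only [List.cons_append, List.append_assoc] using (hl.perm.symm.append hm')

theorem Chain.rel_getElem_succ_mod {L : List α} (h : Chain r L) {i : ℕ} (hi : i < L.length) :
    r L[i] (L[(i + 1) % L.length]'(Nat.mod_lt _ (by omega))) := by
  obtain ⟨a, l, rfl⟩ := List.exists_cons_of_length_pos (by omega : 0 < L.length)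
  have hc : List.IsChain r ((a :: l) ++ [a]) := h
  rcases Nat.lt_or_eq_of_le (show i + 1 ≤ (a :: l).length from hi) with hlt | heq
  · have := hc.getElem i (by simp at hlt ⊢; omega)
    rw [List.getElem_append_left hi, List.getElem_append_left hlt] at this
    simpa only [Nat.mod_eq_of_lt hlt] using this
  · have := hc.getElem i (by simp at heq ⊢; omega)
    rw [List.getElem_append_left hi, List.getElem_append_right heq.ge] at this
    convert this using 1
    simp only [heq, Nat.mod_self, Nat.sub_self, List.getElem_cons_zero]

end Cycle

section CycleJoining

variable {α : Type*} {r : α → α → Prop} {f : α → α}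

theorem Function.chain_periodicOrbit (hf : ∀ a, r a (f a)) {x : α} (hx : x ∈ periodicPts f) :
    (periodicOrbit f x).Chain r :=
  (periodicOrbit_chain' r hx).2 fun m => by rw [iterate_succ_apply']; exact hf _

theorem Function.apply_mem_periodicOrbit {a x : α} (hx : x ∈ periodicPts f)
    (ha : a ∈ periodicOrbit f x) : f a ∈ periodicOrbit f x := by
  obtain ⟨m, rfl⟩ := (mem_periodicOrbit_iff hx).1 ha
  exact (mem_periodicOrbit_iff hx).2 ⟨m + 1, iterate_succ_apply' f m x⟩

theorem Function.mem_of_mem_periodicOrbit {s : Set α} (hs : Set.MapsTo f s s) {a x : α}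
    (hx : x ∈ periodicPts f) (hxs : x ∈ s) (ha : a ∈ periodicOrbit f x) : a ∈ s := by
  obtain ⟨m, rfl⟩ := (mem_periodicOrbit_iff hx).1 ha
  exact hs.iterate m hxs

theorem exists_chain_join_periodicOrbit (hr : ∀ a b x y, r a y → r x y → r x b → r a b)
    (hf : ∀ a, r a (f a)) (hper : ∀ a, a ∈ periodicPts f) {L : List α}
    (hL : Cycle.Chain r L) (hnd : L.Nodup) (hLf : ∀ a ∈ L, f a ∈ L) {x y : α}
    (hxL : x ∉ L) (hy : y ∈ L) (hxy : r x y) :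
    ∃ N : List α, Cycle.Chain r N ∧ N.Nodup ∧ (∀ a ∈ N, f a ∈ N) ∧
      (∀ a, a ∈ N ↔ a ∈ L ∨ a ∈ periodicOrbit f x) ∧ L.length < N.length := by
  obtain ⟨M, hM⟩ : ∃ M : List α, (M : Cycle α) = periodicOrbit f x := ⟨_, rfl⟩
  have hmemM : ∀ a, a ∈ M ↔ a ∈ periodicOrbit f x := fun a => by rw [← hM, Cycle.mem_coe_iff]
  have hxM : x ∈ M := (hmemM x).2 (self_mem_periodicOrbit (hper x))
  have hdisj : ∀ a ∈ L, a ∉ M := by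
    intro a haL haM
    obtain ⟨m, rfl⟩ := (mem_periodicOrbit_iff (hper x)).1 ((hmemM _).1 haM)
    refine hxL (mem_of_mem_periodicOrbit (s := {a | a ∈ L}) hLf (hper _) haL ?_)
    rw [periodicOrbit_apply_iterate_eq (hper x)]
    exact self_mem_periodicOrbit (hper x)
  obtain ⟨N, hN, hperm⟩ := Cycle.exists_chain_perm_append hr hL
    (hM ▸ chain_periodicOrbit hf (hper x)) hy hxM hxy
  have hmemN : ∀ a, a ∈ N ↔ a ∈ L ∨ a ∈ periodicOrbit f x := fun a => by
    rw [hperm.mem_iff, List.mem_append, hmemM]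
  refine ⟨N, hN, hperm.nodup_iff.2 (List.nodup_append.2 ⟨hnd, ?_, ?_⟩), ?_, hmemN, ?_⟩
  · exact Cycle.nodup_coe_iff.1 (hM ▸ nodup_periodicOrbit)
  · exact fun a ha b hb hab => hdisj a ha (hab ▸ hb)
  · simp only [hmemN]
    rintro a (ha | ha)
    exacts [Or.inl (hLf a ha), Or.inr (apply_mem_periodicOrbit (hper x) ha)]
  · rw [hperm.length_eq, List.length_append]
    have := List.length_pos_of_mem hxM
    omega

theorem exists_chain_extending (hr : ∀ a b x y, r a y → r x y → r x b → r a b)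
    (hf : ∀ a, r a (f a)) (hper : ∀ a, a ∈ periodicPts f) {S : Finset α}
    (hS : ∀ a ∈ S, f a ∈ S) {z : α} (hreach : ∀ a ∈ S, ReflTransGen (fun a b => a ∈ S ∧ r a b) a z)
    (L : List α) (hL : Cycle.Chain r L) (hnd : L.Nodup) (hLf : ∀ a ∈ L, f a ∈ L)
    (hLS : ∀ a ∈ L, a ∈ S) (hz : z ∈ L) :
    ∃ N : List α, Cycle.Chain r N ∧ N.Nodup ∧ ∀ a, a ∈ N ↔ a ∈ S := by
  by_cases hcover : ∀ a ∈ S, a ∈ L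
  · exact ⟨L, hL, hnd, fun a => ⟨hLS a, hcover a⟩⟩
  push Not at hcover
  obtain ⟨w, hwS, hwL⟩ := hcover
  obtain ⟨x, y, ⟨hxS, hxy⟩, hxL, hyL⟩ := (hreach w hwS).exists_crossing (p := (· ∈ L)) hwL hz
  obtain ⟨N, hN, hNnd, hNf, hmemN, hlen⟩ :=
    exists_chain_join_periodicOrbit hr hf hper hL hnd hLf hxL hyL hxy
  have hNS : ∀ a ∈ N, a ∈ S := by
    intro a ha
    rcases (hmemN a).1 ha with ha | ha
    exacts [hLS a ha, mem_of_mem_periodicOrbit (s := {a | a ∈ S}) hS (hper x) hxS ha]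
  have : N.length ≤ S.card := by
    classical
    rw [← List.toFinset_card_of_nodup hNnd]
    exact Finset.card_le_card fun a ha => hNS a (List.mem_toFinset.1 ha)
  exact exists_chain_extending hr hf hper hS hreach N hN hNnd hNf hNS ((hmemN z).2 (Or.inl hz))
termination_by S.card - L.length

theorem exists_chain_of_reflTransGen (hr : ∀ a b x y, r a y → r x y → r x b → r a b)
    (hf : ∀ a, r a (f a)) (hper : ∀ a, a ∈ periodicPts f) {S : Finset α}
    (hS : ∀ a ∈ S, f a ∈ S) {z : α} (hz : z ∈ S)
    (hreach : ∀ a ∈ S, ReflTransGen (fun a b => a ∈ S ∧ r a b) a z) :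
    ∃ N : List α, Cycle.Chain r N ∧ N.Nodup ∧ ∀ a, a ∈ N ↔ a ∈ S := by
  obtain ⟨M, hM⟩ : ∃ M : List α, (M : Cycle α) = periodicOrbit f z := ⟨_, rfl⟩
  have hmemM : ∀ a, a ∈ M ↔ a ∈ periodicOrbit f z := fun a => by rw [← hM, Cycle.mem_coe_iff]
  exact exists_chain_extending hr hf hper hS hreach M (hM ▸ chain_periodicOrbit hf (hper z))
    (Cycle.nodup_coe_iff.1 (hM ▸ nodup_periodicOrbit))
    (fun a ha => (hmemM _).2 (apply_mem_periodicOrbit (hper z) ((hmemM a).1 ha)))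
    (fun a ha => mem_of_mem_periodicOrbit (s := {a | a ∈ S}) hS (hper z) hz ((hmemM a).1 ha))
    ((hmemM z).2 (self_mem_periodicOrbit (hper z)))

end CycleJoining

variable {n k : ℕ}

def DeBruijnAdj (u v : Fin n → Fin k) : Prop :=
  ∀ (i : Fin n) (h : i.val + 1 < n), u ⟨i + 1, h⟩ = v i

theorem DeBruijnAdj.zigzag {a b x y : Fin n → Fin k} (hay : DeBruijnAdj a y)
    (hxy : DeBruijnAdj x y) (hxb : DeBruijnAdj x b) : DeBruijnAdj a b :=
  fun i h => (hay i h).trans ((hxy i h).symm.trans (hxb i h))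

theorem deBruijnAdj_comp_finRotate (w : Fin n → Fin k) : DeBruijnAdj w (w ∘ finRotate n) := by
  intro i h
  obtain ⟨m, rfl⟩ : ∃ m, n = m + 1 := ⟨n - 1, by omega⟩
  exact congrArg w (Fin.ext (coe_finRotate_of_ne_last (Fin.ne_of_val_ne (by simp; omega))).symm)

theorem comp_finRotate_mem_periodicPts (w : Fin n → Fin k) :
    w ∈ periodicPts (· ∘ finRotate n) :=
  (finRotate n).surjective.injective_comp_right.mem_periodicPts w

def shiftIn (c : Fin k) (w : Fin n → Fin k) : Fin n → Fin k :=
  fun i => if h : i.val + 1 < n then w ⟨i + 1, h⟩ else c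

theorem deBruijnAdj_shiftIn (c : Fin k) (w : Fin n → Fin k) : DeBruijnAdj w (shiftIn c w) :=
  fun i h => by simp [shiftIn, h]

theorem notMem_range_shiftIn {a c : Fin k} (hac : a ≠ c) {w : Fin n → Fin k}
    (ha : a ∉ Set.range w) : a ∉ Set.range (shiftIn c w) := by
  rintro ⟨i, hi⟩
  unfold shiftIn at hi
  split at hi
  · exact ha ⟨_, hi⟩
  · exact hac hi.symm

theorem shiftIn_iterate_apply_of_le (c : Fin k) (w : Fin n → Fin k) {j : ℕ} {i : Fin n}
    (h : n ≤ i + j) : (shiftIn c)^[j] w i = c := by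
  induction j generalizing i with
  | zero => omega
  | succ j ih =>
    rw [iterate_succ_apply']
    unfold shiftIn
    split
    · exact ih (by simp; omega)
    · rfl

theorem shiftIn_iterate_self (c : Fin k) (w : Fin n → Fin k) :
    (shiftIn c)^[n] w = fun _ => c :=
  funext fun _ => shiftIn_iterate_apply_of_le c w (by omega)

theorem notMem_range_shiftIn_iterate {a c : Fin k} (hac : a ≠ c) {w : Fin n → Fin k}
    (ha : a ∉ Set.range w) (j : ℕ) : a ∉ Set.range ((shiftIn c)^[j] w) := by
  induction j with
  | zero => exact ha
  | succ j ih => exact iterate_succ_apply' (shiftIn c) j w ▸ notMem_range_shiftIn hac ih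

theorem reflTransGen_shiftIn_iterate {a c : Fin k} (hac : a ≠ c) {w : Fin n → Fin k}
    (ha : a ∉ Set.range w) (j : ℕ) :
    ReflTransGen (fun u v => ¬ Surjective u ∧ DeBruijnAdj u v) w ((shiftIn c)^[j] w) := by
  induction j with
  | zero => exact .refl
  | succ j ih =>
    rw [iterate_succ_apply']
    exact ih.tail ⟨fun hs => notMem_range_shiftIn_iterate hac ha j (hs a), deBruijnAdj_shiftIn c _⟩

theorem reflTransGen_const_of_notMem_range {a c : Fin k} (hac : a ≠ c) {w : Fin n → Fin k}
    (ha : a ∉ Set.range w) :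
    ReflTransGen (fun u v => ¬ Surjective u ∧ DeBruijnAdj u v) w (fun _ => c) :=
  shiftIn_iterate_self c w ▸ reflTransGen_shiftIn_iterate hac ha n

theorem reflTransGen_const_of_not_surjective {c d e : Fin k} (hcd : c ≠ d) (hce : c ≠ e)
    (hde : d ≠ e) {w : Fin n → Fin k} (hw : ¬ Surjective w) :
    ReflTransGen (fun u v => ¬ Surjective u ∧ DeBruijnAdj u v) w (fun _ => c) := by
  obtain ⟨a, ha⟩ : ∃ a, a ∉ Set.range w := by simpa [Surjective, Set.range] using hw
  by_cases hac : a = c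
  · subst hac
    exact (reflTransGen_const_of_notMem_range hcd ha).trans
      (reflTransGen_const_of_notMem_range hce.symm (w := fun _ : Fin n => d) fun ⟨_, h⟩ => hde h)
  · exact reflTransGen_const_of_notMem_range hac ha

theorem apply_add_of_deBruijnAdj_succ {g : ℕ → Fin n → Fin k}
    (hg : ∀ m, DeBruijnAdj (g m) (g (m + 1))) (m j : ℕ) (t : Fin n) (ht : t + j < n) :
    g (m + j) t = g m ⟨t + j, ht⟩ := by
  induction j generalizing t with
  | zero => rfl
  | succ j ih =>
    rw [← Nat.add_assoc, ← hg (m + j) t (by omega), ih ⟨t + 1, by omega⟩ (by simp; omega)]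
    exact congrArg (g m) (Fin.ext (by simp only; omega))

theorem isUCycle_of_chain [NeZero n] {S : Finset (Fin n → Fin k)} {L : List (Fin n → Fin k)}
    (hL : Cycle.Chain DeBruijnAdj (L : Cycle (Fin n → Fin k))) (hnd : L.Nodup)
    (hmem : ∀ w, w ∈ L ↔ w ∈ S) (hS : S.Nonempty) : ∃ s, IsUCycle S s := by
  classical
  have hlen : L.length = S.card := by
    rw [← List.toFinset_card_of_nodup hnd]
    congr 1
    ext w
    simp [hmem]
  have hpos : 0 < L.length := hlen ▸ hS.card_pos
  have : NeZero S.card := ⟨by omega⟩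
  set g : ℕ → Fin n → Fin k := fun m => L[m % L.length]'(Nat.mod_lt _ hpos) with hg
  have hg_mod : ∀ m, g (m % S.card) = g m := fun m => by simp only [hg, ← hlen, Nat.mod_mod]
  have hadj : ∀ m, DeBruijnAdj (g m) (g (m + 1)) := fun m => by
    simpa only [hg, Nat.mod_add_mod] using hL.rel_getElem_succ_mod (Nat.mod_lt m hpos)
  refine ⟨fun i => g i.val 0, ?_⟩
  have hwin : (fun i : ZMod S.card => fun j : Fin n => g (i + ((j : ℕ) : ZMod S.card)).val 0) =
      fun i => g i.val := by
    funext i j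
    rw [ZMod.val_add, ZMod.val_natCast, Nat.add_mod_mod, hg_mod,
      apply_add_of_deBruijnAdj_succ hadj i.val j 0 (by simp)]
    simp
  unfold IsUCycle
  rw [hwin]
  refine ⟨fun i _ => (hmem _).1 (List.getElem_mem _), fun i _ i' _ h => ?_, fun w hw => ?_⟩
  · have := hnd.getElem_inj_iff.1 h
    rw [Nat.mod_eq_of_lt (by rw [hlen]; exact ZMod.val_lt i),
      Nat.mod_eq_of_lt (by rw [hlen]; exact ZMod.val_lt i')] at this
    exact ZMod.val_injective _ this
  · obtain ⟨m, hm, rfl⟩ := List.getElem_of_mem ((hmem w).2 hw)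
    refine ⟨m, trivial, ?_⟩
    simp only [hg, ZMod.val_natCast, ← hlen, Nat.mod_eq_of_lt hm]

theorem isUCycle_of_fin_zero {S : Finset (Fin 0 → Fin k)} (hS : S.Nonempty)
    (s : ZMod S.card → Fin k) : IsUCycle S s := by
  obtain ⟨w, hw⟩ := hS
  have hSw : S = {w} := Finset.eq_singleton_iff_unique_mem.2 ⟨hw, fun _ _ => Subsingleton.elim _ _⟩
  have : Subsingleton (ZMod S.card) := by rw [hSw, Finset.card_singleton]; infer_instance
  exact ⟨fun _ _ => Finset.mem_coe.2 (by convert hw), fun _ _ _ _ _ => Subsingleton.elim _ _,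
    fun _ _ => ⟨0, trivial, Subsingleton.elim _ _⟩⟩

theorem exists_ucycle_non_surjective_general (n k : ℕ) (hk : k > 2) :
    ∃ s : ZMod (Finset.univ.filter
        (fun w : Fin n → Fin k => ¬ Function.Surjective w)).card → Fin k,
      IsUCycle (Finset.univ.filter (fun w : Fin n → Fin k => ¬ Function.Surjective w)) s := by
  obtain ⟨c, d, e, hcd, hce, hde⟩ :=
    Fintype.two_lt_card_iff.1 (by simpa using hk : 2 < Fintype.card (Fin k))
  have hconst : (fun _ => c) ∈ Finset.univ.filter fun w : Fin n → Fin k => ¬ Surjective w := by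
    simpa using fun h : Surjective (fun _ : Fin n => c) => hcd (h d).choose_spec
  rcases Nat.eq_zero_or_pos n with rfl | hn
  · exact ⟨fun _ => c, isUCycle_of_fin_zero ⟨_, hconst⟩ _⟩
  have : NeZero n := ⟨hn.ne'⟩
  obtain ⟨L, hL, hnd, hmem⟩ := exists_chain_of_reflTransGen (r := DeBruijnAdj)
    (f := (· ∘ finRotate n)) (fun _ _ _ _ => DeBruijnAdj.zigzag)
    deBruijnAdj_comp_finRotate comp_finRotate_mem_periodicPts
    (fun w hw => by simpa [Equiv.surjective_comp] using hw) hconst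
    fun w hw => ReflTransGen.mono (fun u v huv => by simpa using huv) _ _
      (reflTransGen_const_of_not_surjective hcd hce hde (by simpa using hw))
  exact isUCycle_of_chain hL hnd hmem ⟨_, hconst⟩

/-- For `n ≥ k > 2` there exists a U-cycle for the set of non-surjective `n`-letter words
over a `k`-letter alphabet (words with at least one letter of the alphabet missing). -/
theorem exists_ucycle_non_surjective (n k : ℕ) (hnk : n ≥ k) (hk : k > 2) :
    ∃ s : ZMod (Finset.univ.filter
        (fun w : Fin n → Fin k => ¬ Function.Surjective w)).card → Fin k,
      IsUCycle (Finset.univ.filter (fun w : Fin n → Fin k => ¬ Function.Surjective w)) s :=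
  exists_ucycle_non_surjective_general n k hk
end

section
/- For every n ≥ 3 there is no U-cycle for the set of injective words of length n over an n-letter alphabet, i.e., for the set of permutations of Fin n (bijections from Fin n to Fin n). -/
/-- For every `n ≥ 3` there is no U-cycle for the set of injective `n`-letter words over
an `n`-letter alphabet, i.e., for the set of permutations of `Fin n`. -/
theorem no_ucycle_permutations (n : ℕ) (hn : 3 ≤ n) :
    ¬ ∃ s : ZMod (Finset.univ.filter
        (fun w : Fin n → Fin n => Function.Injective w)).card → Fin n,
      IsUCycle (Finset.univ.filter (fun w : Fin n → Fin n => Function.Injective w)) s := by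
  haveI : NeZero n := ⟨by omega⟩
  set S : Finset (Fin n → Fin n) :=
    Finset.univ.filter (fun w : Fin n → Fin n => Function.Injective w) with hS
  -- the cardinality of S is Nat.factorial n
  have hcard : S.card = Nat.factorial n := by
    have : S.card = Fintype.card {f : Fin n → Fin n // Function.Injective f} := by
      rw [Fintype.card_subtype]
    rw [this, Fintype.card_congr (Equiv.subtypeInjectiveEquivEmbedding (Fin n) (Fin n)),
      Fintype.card_embedding_eq, Fintype.card_fin, Nat.descFactorial_self]
  have hNgt : n < S.card := by rw [hcard]; exact Nat.lt_factorial_self hn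
  haveI : NeZero S.card := ⟨by omega⟩
  rintro ⟨s, hs⟩
  -- each window is injective
  have hinj : ∀ i : ZMod S.card,
      Function.Injective (fun j : Fin n => s (i + ((j : ℕ) : ZMod S.card))) := by
    intro i
    have := hs.mapsTo (Set.mem_univ i)
    simp only [hS, Finset.coe_filter, Set.mem_setOf_eq, Finset.mem_univ, true_and] at this
    exact this
  -- each window is surjective
  have hsurj : ∀ i : ZMod S.card,
      Function.Surjective (fun j : Fin n => s (i + ((j : ℕ) : ZMod S.card))) := fun i =>
    Finite.surjective_of_injective (hinj i)
  -- periodicity: s (i + n) = s i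
  have hper : ∀ i : ZMod S.card, s (i + (n : ZMod S.card)) = s i := by
    intro i
    obtain ⟨j, hj⟩ := hsurj (i + 1) (s i)
    simp only at hj
    rcases Nat.lt_or_ge (j : ℕ) (n - 1) with hlt | hge
    · exfalso
      have hj1 : ((j : ℕ) + 1) < n := by omega
      have h2 : (fun j : Fin n => s (i + ((j : ℕ) : ZMod S.card))) ⟨(j : ℕ) + 1, hj1⟩
          = (fun j : Fin n => s (i + ((j : ℕ) : ZMod S.card))) 0 := by
        simp only
        rw [Fin.val_zero]
        push_cast
        rw [show i + (((j : ℕ) : ZMod S.card) + 1) = i + 1 + ((j : ℕ) : ZMod S.card) by ring,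
          hj]
        simp
      have := hinj i h2
      have := congrArg Fin.val this
      simp at this
    · have hjval : (j : ℕ) = n - 1 := by have := j.isLt; omega
      rw [hjval] at hj
      have : i + 1 + ((n - 1 : ℕ) : ZMod S.card) = i + (n : ZMod S.card) := by
        have : ((1 : ℕ) : ZMod S.card) + ((n - 1 : ℕ) : ZMod S.card) = (n : ZMod S.card) := by
          rw [← Nat.cast_add]
          congr 1
          omega
        push_cast at this ⊢
        linear_combination this
      rw [this] at hj
      exact hj
  -- windows at 0 and n coincide
  have heq : (fun j : Fin n => s ((0 : ZMod S.card) + (n : ZMod S.card) + ((j : ℕ) : ZMod S.card)))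
      = (fun j : Fin n => s ((0 : ZMod S.card) + ((j : ℕ) : ZMod S.card))) := by
    funext j
    rw [show (0 : ZMod S.card) + (n : ZMod S.card) + ((j : ℕ) : ZMod S.card)
        = ((0 : ZMod S.card) + ((j : ℕ) : ZMod S.card)) + (n : ZMod S.card) by ring]
    exact hper _
  have h0 : (0 : ZMod S.card) + (n : ZMod S.card) = 0 :=
    hs.injOn (Set.mem_univ _) (Set.mem_univ _) heq
  rw [zero_add] at h0
  have hdvd : S.card ∣ n := (ZMod.natCast_eq_zero_iff n S.card).mp h0
  have := Nat.le_of_dvd (by omega) hdvd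
  omega
end

section
/- There is no U-cycle for the set of illegal rankings of 3 contestants (this set has exactly 14 elements, out of the 27 words of length 3 over {1,2,3}). -/
/-- A ranking `r : Fin n → Fin n` (value `i` represents rank `i+1`) is legal if the rank
of each contestant equals 1 plus the number of contestants with strictly smaller rank
(0-indexed: `r i = #{j | r j < r i}`). -/
def LegalRanking {n : ℕ} (r : Fin n → Fin n) : Prop :=
  ∀ i : Fin n, (r i : ℕ) = (Finset.univ.filter (fun j : Fin n => r j < r i)).card


instance {n : ℕ} : DecidablePred (fun r : Fin n → Fin n => LegalRanking r) := fun r =>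
  inferInstanceAs (Decidable (∀ i : Fin n,
    (r i : ℕ) = (Finset.univ.filter (fun j : Fin n => r j < r i)).card))

/-- Key invariant: in every illegal ranking of 3, the first two letters sum to ≤ 1
iff the last two letters do. (The de Bruijn graph on illegal words is disconnected.) -/
lemma illegal_invariant : ∀ w : Fin 3 → Fin 3, ¬ LegalRanking w →
    (((w 0 : ℕ) + (w 1 : ℕ) ≤ 1) ↔ ((w 1 : ℕ) + (w 2 : ℕ) ≤ 1)) := by decide

/-- There is no U-cycle for the set of illegal rankings of 3 contestants
(a set with 14 = 27 − 13 elements). -/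
theorem no_ucycle_illegal_rankings_three :
    ¬ ∃ s : ZMod (Finset.univ.filter
        (fun r : Fin 3 → Fin 3 => ¬ LegalRanking r)).card → Fin 3,
      IsUCycle (Finset.univ.filter (fun r : Fin 3 → Fin 3 => ¬ LegalRanking r)) s := by
  set S := Finset.univ.filter (fun r : Fin 3 → Fin 3 => ¬ LegalRanking r) with hS
  rintro ⟨s, hs⟩
  have hN : S.card = 14 := by decide
  haveI : NeZero S.card := ⟨by rw [hN]; norm_num⟩
  set f : ZMod S.card → (Fin 3 → Fin 3) :=
    (fun i : ZMod S.card => fun j : Fin 3 => s (i + ((j : ℕ) : ZMod S.card))) with hf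
  have hmem : ∀ i, ¬ LegalRanking (f i) := by
    intro i
    have h := hs.1 (Set.mem_univ i)
    have h' : f i ∈ S := h
    rw [hS, Finset.mem_filter] at h'
    exact h'.2
  have e0 : ∀ i, f i 0 = s i := by intro i; simp [hf]
  have e1 : ∀ i, f i 1 = s (i + 1) := by intro i; simp [hf]
  have e2 : ∀ i, f i 2 = s (i + 1 + 1) := by
    intro i
    show s (i + (((2 : Fin 3) : ℕ) : ZMod S.card)) = s (i + 1 + 1)
    norm_num
    ring_nf
  have hstep : ∀ i : ZMod S.card,
      ((s i : ℕ) + (s (i + 1) : ℕ) ≤ 1 ↔ (s (i + 1) : ℕ) + (s (i + 1 + 1) : ℕ) ≤ 1) := by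
    intro i
    have h := illegal_invariant (f i) (hmem i)
    rwa [e0, e1, e2] at h
  have hconst : ∀ k : ℕ,
      ((s ((k : ZMod S.card)) : ℕ) + (s ((k : ZMod S.card) + 1) : ℕ) ≤ 1 ↔
        (s 0 : ℕ) + (s (0 + 1) : ℕ) ≤ 1) := by
    intro k
    induction k with
    | zero => simp
    | succ n ih =>
      have hc : ((n + 1 : ℕ) : ZMod S.card) = (n : ZMod S.card) + 1 := by push_cast; ring
      rw [hc, ← hstep (n : ZMod S.card)]
      exact ih
  have hconst' : ∀ i : ZMod S.card,
      ((s i : ℕ) + (s (i + 1) : ℕ) ≤ 1 ↔ (s 0 : ℕ) + (s (0 + 1) : ℕ) ≤ 1) := by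
    intro i
    obtain ⟨k, rfl⟩ := ZMod.natCast_rightInverse.surjective i
    exact hconst k
  have hw1 : (![0, 0, 1] : Fin 3 → Fin 3) ∈ S := by decide
  have hw2 : (![1, 1, 1] : Fin 3 → Fin 3) ∈ S := by decide
  obtain ⟨i₁, -, h1⟩ := hs.2.2 (Finset.mem_coe.mpr hw1)
  obtain ⟨i₂, -, h2⟩ := hs.2.2 (Finset.mem_coe.mpr hw2)
  have h1' : f i₁ = ![0, 0, 1] := h1
  have h2' : f i₂ = ![1, 1, 1] := h2
  have a0 : s i₁ = 0 := by rw [← e0 i₁, h1']; rfl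
  have a1 : s (i₁ + 1) = 0 := by rw [← e1 i₁, h1']; rfl
  have b0 : s i₂ = 1 := by rw [← e0 i₂, h2']; rfl
  have b1 : s (i₂ + 1) = 1 := by rw [← e1 i₂, h2']; rfl
  have H1 := hconst' i₁
  have H2 := hconst' i₂
  rw [a0, a1] at H1
  rw [b0, b1] at H2
  simp at H1 H2
  omega
end

section
/- Let n ≥ 4 and k ≥ 1. For any two non-injective words w and w' of length n over a k-letter alphabet, there exists a finite sequence of non-injective words of length n over Fin k, beginning with w and ending with w', in which every consecutive pair of words overlaps. -/
/-- Two words `w, w'` of length `n` overlap if the last `n−1` letters of `w` equal the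
first `n−1` letters of `w'`. -/
def Overlap {n k : ℕ} (w w' : Fin n → Fin k) : Prop :=
  ∀ i j : Fin n, (j : ℕ) = (i : ℕ) + 1 → w j = w' i

private def shiftW {n k : ℕ} (v : Fin n → Fin k) (a : Fin k) : Fin n → Fin k :=
  fun i => if h : (i : ℕ) + 1 < n then v ⟨(i : ℕ) + 1, h⟩ else a

private lemma overlap_shiftW {n k : ℕ} (v : Fin n → Fin k) (a : Fin k) :
    Overlap v (shiftW v a) := by
  intro i j hj
  have h : (i : ℕ) + 1 < n := hj ▸ j.isLt
  simp only [shiftW, dif_pos h]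
  exact congrArg v (Fin.ext hj)

private lemma noninj_of_eq {n k : ℕ} {v : Fin n → Fin k} {i j : Fin n}
    (hij : i ≠ j) (he : v i = v j) : ¬ Function.Injective v :=
  fun h => hij (h he)

private def segA {n k : ℕ} (w : Fin n → Fin k) (c : Fin k) (t : ℕ) : Fin n → Fin k :=
  fun i => if h : (i : ℕ) + t < n then w ⟨(i : ℕ) + t, h⟩ else c

private def segB {n k : ℕ} (q : Fin n → Fin k) (e : Fin k) (t : ℕ) : Fin n → Fin k :=
  fun i => if (i : ℕ) + t < n then e
    else q ⟨((i : ℕ) + t) % n, Nat.mod_lt _ (by have := i.isLt; omega)⟩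

private lemma segA_zero {n k : ℕ} (w : Fin n → Fin k) (c : Fin k) : segA w c 0 = w := by
  funext i
  simp only [segA, Nat.add_zero, i.isLt, dif_pos]

private lemma segA_top {n k : ℕ} (w : Fin n → Fin k) (c : Fin k) :
    segA w c n = fun _ => c := by
  funext i
  have : ¬ ((i : ℕ) + n < n) := by omega
  simp only [segA, dif_neg this]

private lemma segA_step {n k : ℕ} (w : Fin n → Fin k) (c : Fin k) (t : ℕ) :
    shiftW (segA w c t) c = segA w c (t + 1) := by
  funext i
  simp only [shiftW, segA]
  by_cases h1 : (i : ℕ) + 1 < n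
  · rw [dif_pos h1]
    by_cases h2 : (i : ℕ) + 1 + t < n
    · rw [dif_pos h2, dif_pos (by omega : (i : ℕ) + (t + 1) < n)]
      exact congrArg w (Fin.ext (by omega : (i : ℕ) + 1 + t = (i : ℕ) + (t + 1)))
    · rw [dif_neg h2, dif_neg (by omega : ¬ ((i : ℕ) + (t + 1) < n))]
  · rw [dif_neg h1, dif_neg (by omega : ¬ ((i : ℕ) + (t + 1) < n))]

private lemma segA_noninj {n k : ℕ} (hn : 2 ≤ n) (w : Fin n → Fin k) {t : ℕ} (ht : 1 ≤ t) :
    ¬ Function.Injective (segA w (w ⟨n - 1, by omega⟩) t) := by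
  refine noninj_of_eq (i := ⟨n - 2, by omega⟩) (j := ⟨n - 1, by omega⟩)
    (by simp only [ne_eq, Fin.mk.injEq]; omega) ?_
  simp only [segA]
  rw [dif_neg (by omega : ¬ (n - 1 + t < n))]
  by_cases h : n - 2 + t < n
  · rw [dif_pos h]
    exact congrArg w (Fin.ext (by omega : (n - 2 + t : ℕ) = n - 1))
  · rw [dif_neg h]

private lemma segB_zero {n k : ℕ} (q : Fin n → Fin k) (e : Fin k) :
    segB q e 0 = fun _ => e := by
  funext i
  simp only [segB, Nat.add_zero, i.isLt, if_pos]

private lemma segB_top {n k : ℕ} (q : Fin n → Fin k) (e : Fin k) : segB q e n = q := by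
  funext i
  have h : ¬ ((i : ℕ) + n < n) := by omega
  rw [segB, if_neg h]
  refine congrArg q (Fin.ext ?_)
  show ((i : ℕ) + n) % n = (i : ℕ)
  rw [Nat.add_mod_right]
  exact Nat.mod_eq_of_lt i.isLt

private lemma segB_step {n k : ℕ} (q : Fin n → Fin k) (e : Fin k) {t : ℕ} (ht : t < n) :
    shiftW (segB q e t) (q ⟨t, ht⟩) = segB q e (t + 1) := by
  funext i
  simp only [shiftW, segB]
  by_cases h1 : (i : ℕ) + 1 < n
  · rw [dif_pos h1]
    by_cases h2 : (i : ℕ) + 1 + t < n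
    · rw [if_pos h2, if_pos (by omega : (i : ℕ) + (t + 1) < n)]
    · rw [if_neg h2, if_neg (by omega : ¬ ((i : ℕ) + (t + 1) < n))]
      exact congrArg q (Fin.ext (congrArg (· % n)
        (by omega : (i : ℕ) + 1 + t = (i : ℕ) + (t + 1))))
  · rw [dif_neg h1, if_neg (by omega : ¬ ((i : ℕ) + (t + 1) < n))]
    have hi : (i : ℕ) = n - 1 := by have := i.isLt; omega
    have key : ((i : ℕ) + (t + 1)) % n = t := by
      rw [hi, (by omega : n - 1 + (t + 1) = t + n), Nat.add_mod_right]
      exact Nat.mod_eq_of_lt ht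
    exact congrArg q (Fin.ext key.symm)

private lemma segB_const_noninj {n k : ℕ} (hn : 4 ≤ n) (d e : Fin k) (t : ℕ) :
    ¬ Function.Injective (segB (n := n) (fun _ => d) e t) := by
  by_cases h : t + 2 ≤ n
  · refine noninj_of_eq (i := ⟨0, by omega⟩) (j := ⟨1, by omega⟩)
      (by simp only [ne_eq, Fin.mk.injEq]; omega) ?_
    simp only [segB]
    rw [if_pos (show (0 : ℕ) + t < n by omega), if_pos (show (1 : ℕ) + t < n by omega)]
  · refine noninj_of_eq (i := ⟨n - 2, by omega⟩) (j := ⟨n - 1, by omega⟩)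
      (by simp only [ne_eq, Fin.mk.injEq]; omega) ?_
    simp only [segB]
    rw [if_neg (show ¬ ((n - 2 : ℕ) + t < n) by omega),
      if_neg (show ¬ ((n - 1 : ℕ) + t < n) by omega)]

private lemma segB_noninj {n k : ℕ} (hn : 2 ≤ n) (q : Fin n → Fin k) {t : ℕ}
    (ht : t ≤ n - 1) :
    ¬ Function.Injective (segB q (q ⟨0, by omega⟩) t) := by
  refine noninj_of_eq (i := ⟨0, by omega⟩) (j := ⟨1, by omega⟩)
    (by simp only [ne_eq, Fin.mk.injEq]; omega) ?_
  simp only [segB]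
  rw [if_pos (show (0 : ℕ) + t < n by omega)]
  by_cases h : (1 : ℕ) + t < n
  · rw [if_pos h]
  · rw [if_neg h]
    have key : ((1 : ℕ) + t) % n = 0 := by
      rw [(by omega : (1 : ℕ) + t = 0 + n), Nat.add_mod_right, Nat.zero_mod]
    exact congrArg q (Fin.ext key.symm)

private lemma rtg_of_seq {α : Type*} {R : α → α → Prop} (q : ℕ → α) :
    ∀ T : ℕ, (∀ t, t < T → R (q t) (q (t + 1))) → Relation.ReflTransGen R (q 0) (q T)
  | 0, _ => .refl
  | (T + 1), h =>
    .tail (rtg_of_seq q T fun t ht => h t (by omega)) (h T (by omega))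

private lemma chain_of_rtg {α : Type*} {R : α → α → Prop} {a b : α}
    (h : Relation.ReflTransGen R a b) :
    ∃ (m : ℕ) (f : Fin (m + 1) → α), f 0 = a ∧ f (Fin.last m) = b ∧
      ∀ i : Fin m, R (f i.castSucc) (f i.succ) := by
  induction h with
  | refl => exact ⟨0, fun _ => a, rfl, rfl, fun i => i.elim0⟩
  | @tail b' c _ hbc ih =>
    obtain ⟨m, f, h0, hl, hs⟩ := ih
    refine ⟨m + 1, Fin.snoc f c, ?_, ?_, ?_⟩
    · simp only [show (0 : Fin (m + 1 + 1)) = Fin.castSucc 0 by rfl, Fin.snoc_castSucc]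
      exact h0
    · simp
    · intro i
      induction i using Fin.lastCases with
      | last =>
        rw [Fin.succ_last, Fin.snoc_castSucc, Fin.snoc_last, hl]
        exact hbc
      | cast j =>
        rw [Fin.succ_castSucc, Fin.snoc_castSucc, Fin.snoc_castSucc]
        exact hs j

/-- For `n ≥ 4` and `k ≥ 1`, any two non-injective `n`-letter words over `Fin k` are
joined by a finite sequence of non-injective words in which consecutive words overlap. -/
theorem non_injective_connected (n k : ℕ) (hn : 4 ≤ n) (hk : 1 ≤ k)
    (w w' : Fin n → Fin k) (hw : ¬ Function.Injective w) (hw' : ¬ Function.Injective w') :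
    ∃ (m : ℕ) (f : Fin (m + 1) → Fin n → Fin k),
      f 0 = w ∧ f (Fin.last m) = w' ∧
      (∀ i, ¬ Function.Injective (f i)) ∧
      (∀ i : Fin m, Overlap (f i.castSucc) (f i.succ)) := by
  have hn0 : 0 < n := by omega
  set R : (Fin n → Fin k) → (Fin n → Fin k) → Prop :=
    fun v v' => Overlap v v' ∧ ¬Function.Injective v ∧ ¬Function.Injective v' with hR
  have h1 : Relation.ReflTransGen R w (fun _ => w ⟨n - 1, by omega⟩) := by
    have hsteps : ∀ t, t < n →
        R (segA w (w ⟨n - 1, by omega⟩) t) (segA w (w ⟨n - 1, by omega⟩) (t + 1)) := by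
      intro t ht
      refine ⟨?_, ?_, ?_⟩
      · rw [← segA_step]; exact overlap_shiftW _ _
      · rcases Nat.eq_zero_or_pos t with h0 | h0
        · subst h0; rw [segA_zero]; exact hw
        · exact segA_noninj (by omega) w h0
      · exact segA_noninj (by omega) w (by omega)
    have := rtg_of_seq (R := R) (segA w (w ⟨n - 1, by omega⟩)) n hsteps
    rwa [segA_zero, segA_top] at this
  have h2 : Relation.ReflTransGen R (fun _ => w ⟨n - 1, by omega⟩)
      (fun _ => w' ⟨0, by omega⟩) := by
    have hsteps : ∀ t, t < n →
        R (segB (fun _ => w' ⟨0, by omega⟩) (w ⟨n - 1, by omega⟩) t)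
          (segB (fun _ => w' ⟨0, by omega⟩) (w ⟨n - 1, by omega⟩) (t + 1)) := by
      intro t ht
      refine ⟨?_, ?_, ?_⟩
      · rw [← segB_step _ _ ht]; exact overlap_shiftW _ _
      · exact segB_const_noninj hn _ _ _
      · exact segB_const_noninj hn _ _ _
    have := rtg_of_seq (R := R)
      (segB (fun _ => w' ⟨0, by omega⟩) (w ⟨n - 1, by omega⟩)) n hsteps
    rwa [segB_zero, segB_top] at this
  have h3 : Relation.ReflTransGen R (fun _ => w' ⟨0, by omega⟩) w' := by
    have hsteps : ∀ t, t < n →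
        R (segB w' (w' ⟨0, by omega⟩) t) (segB w' (w' ⟨0, by omega⟩) (t + 1)) := by
      intro t ht
      refine ⟨?_, ?_, ?_⟩
      · rw [← segB_step _ _ ht]; exact overlap_shiftW _ _
      · exact segB_noninj (by omega) w' (by omega)
      · rcases Nat.lt_or_ge (t + 1) n with h0 | h0
        · exact segB_noninj (by omega) w' (by omega)
        · have htn : t + 1 = n := by omega
          rw [htn, segB_top]; exact hw'
    have := rtg_of_seq (R := R) (segB w' (w' ⟨0, by omega⟩)) n hsteps
    rwa [segB_zero, segB_top] at this
  obtain ⟨m, f, h0, hl, hstep⟩ := chain_of_rtg (h1.trans (h2.trans h3))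
  refine ⟨m, f, h0, hl, ?_, fun i => (hstep i).1⟩
  intro i
  induction i using Fin.lastCases with
  | last => rw [hl]; exact hw'
  | cast j => exact (hstep j).2.1
end

section
/- Let n ≥ k > 2. For any two non-surjective words w and w' of length n over a k-letter alphabet, there exists a finite sequence of non-surjective words of length n over Fin k, beginning with w and ending with w', in which every consecutive pair of words overlaps. -/
/-- Shift a word left by one, appending `c` at the end. -/
def shiftw {n k : ℕ} (w : Fin n → Fin k) (c : Fin k) : Fin n → Fin k :=
  fun i => if h : (i : ℕ) + 1 < n then w ⟨(i : ℕ) + 1, h⟩ else c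

lemma overlap_shiftw {n k : ℕ} (w : Fin n → Fin k) (c : Fin k) :
    Overlap w (shiftw w c) := by
  intro i j hj
  have h : (i : ℕ) + 1 < n := hj ▸ j.isLt
  simp only [shiftw, dif_pos h]
  congr 1
  exact Fin.ext hj

/-- Iterated shifting with appended letters given by `g`. -/
def chainw {n k : ℕ} (w : Fin n → Fin k) (g : ℕ → Fin k) : ℕ → Fin n → Fin k
  | 0 => w
  | t + 1 => shiftw (chainw w g t) (g t)

lemma chainw_add {n k : ℕ} (w : Fin n → Fin k) (g : ℕ → Fin k) (t s : ℕ) :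
    chainw w g (t + s) = chainw (chainw w g t) (fun r => g (t + r)) s := by
  induction s with
  | zero => rfl
  | succ s ih =>
    show shiftw (chainw w g (t + s)) (g (t + s)) = _
    rw [ih]
    rfl

lemma chainw_ne {n k : ℕ} (w : Fin n → Fin k) (g : ℕ → Fin k) (a : Fin k)
    (hw : ∀ i, w i ≠ a) : ∀ t, (∀ s, s < t → g s ≠ a) → ∀ i, chainw w g t i ≠ a := by
  intro t
  induction t with
  | zero => exact fun _ i => hw i
  | succ t ih =>
    intro hg i
    show shiftw _ _ i ≠ a
    unfold shiftw
    split
    · exact ih (fun s hs => hg s (by omega)) _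
    · exact hg t (by omega)

lemma chainw_const {n k : ℕ} (w : Fin n → Fin k) (g : ℕ → Fin k) (b : Fin k) :
    ∀ t, (∀ s, s < t → g s = b) → ∀ i : Fin n, n ≤ (i : ℕ) + t → chainw w g t i = b := by
  intro t
  induction t with
  | zero =>
    intro _ i hi
    exact absurd i.isLt (by omega)
  | succ t ih =>
    intro hg i hi
    show shiftw _ _ i = b
    unfold shiftw
    split
    · next h => exact ih (fun s hs => hg s (by omega)) ⟨(i : ℕ) + 1, h⟩ (by simp; omega)
    · exact hg t (by omega)

lemma chainw_target {n k : ℕ} (w' : Fin n → Fin k) (c : Fin k) (g : ℕ → Fin k)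
    (hg : ∀ s (hs : s < n), g s = w' ⟨s, hs⟩) :
    ∀ t, ∀ _ht : t ≤ n, ∀ i : Fin n,
      ((i : ℕ) + t < n → chainw (fun _ => c) g t i = c) ∧
      (∀ _ : n ≤ (i : ℕ) + t, chainw (fun _ => c) g t i
          = w' ⟨(i : ℕ) + t - n, by have := i.isLt; omega⟩) := by
  intro t
  induction t with
  | zero =>
    intro _ i
    refine ⟨fun _ => rfl, fun hn => absurd hn (by have := i.isLt; omega)⟩
  | succ t ih =>
    intro ht i
    have hih := ih (by omega)
    constructor
    · intro hlt
      show shiftw _ _ i = c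
      unfold shiftw
      split
      · next h => exact (hih ⟨(i : ℕ) + 1, h⟩).1 (by simpa using by omega)
      · next h => exact absurd i.isLt (by omega)
    · intro hn
      show shiftw _ _ i = _
      unfold shiftw
      split
      · next h =>
        have := (hih ⟨(i : ℕ) + 1, h⟩).2 (by simp; omega)
        rw [this]
        congr 1
        exact Fin.ext (by simp; omega)
      · next h =>
        have htn : t < n := by omega
        rw [hg t htn]
        congr 1
        exact Fin.ext (by have := i.isLt; simp; omega)

/-- For `n ≥ k > 2`, any two non-surjective `n`-letter words over `Fin k` are joined by a
finite sequence of non-surjective words in which consecutive words overlap. -/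
theorem non_surjective_connected (n k : ℕ) (hnk : n ≥ k) (hk : k > 2)
    (w w' : Fin n → Fin k) (hw : ¬ Function.Surjective w) (hw' : ¬ Function.Surjective w') :
    ∃ (m : ℕ) (f : Fin (m + 1) → Fin n → Fin k),
      f 0 = w ∧ f (Fin.last m) = w' ∧
      (∀ i, ¬ Function.Surjective (f i)) ∧
      (∀ i : Fin m, Overlap (f i.castSucc) (f i.succ)) := by
  simp only [Function.Surjective, not_forall] at hw hw'
  obtain ⟨a, ha⟩ := hw
  obtain ⟨a', ha'⟩ := hw'
  simp only [not_exists] at ha ha'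
  have hn3 : 3 ≤ n := le_trans hk hnk
  set c : Fin k := w' ⟨0, by omega⟩ with hc
  obtain ⟨b, hb⟩ : ∃ b : Fin k, b ≠ a :=
    Fintype.exists_ne_of_one_lt_card (by simp; omega) a
  obtain ⟨d, hd⟩ : ∃ d : Fin k, d ∉ ({b, c} : Finset (Fin k)) := by
    by_contra h
    push_neg at h
    have hsub : (Finset.univ : Finset (Fin k)) ⊆ {b, c} := fun x _ => h x
    have hcard := Finset.card_le_card hsub
    have h2 : ({b, c} : Finset (Fin k)).card ≤ 2 :=
      le_trans (Finset.card_insert_le _ _) (by simp)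
    simp [Finset.card_univ] at hcard
    omega
  simp only [Finset.mem_insert, Finset.mem_singleton, not_or] at hd
  obtain ⟨hdb, hdc⟩ := hd
  set g : ℕ → Fin k := fun t =>
    if t < n then b else if t < 2 * n then c
    else if h : t - 2 * n < n then w' ⟨t - 2 * n, h⟩ else c with hgdef
  have hg1 : ∀ s, s < n → g s = b := fun s hs => by simp [hgdef, hs]
  have hg2 : ∀ s, s < n → g (n + s) = c := fun s hs => by
    simp only [hgdef]
    rw [if_neg (by omega), if_pos (by omega)]
  have hg3 : ∀ s (hs : s < n), g (2 * n + s) = w' ⟨s, hs⟩ := fun s hs => by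
    simp only [hgdef]
    rw [if_neg (by omega), if_neg (by omega), dif_pos (by omega : 2 * n + s - 2 * n < n)]
    congr 1
    exact Fin.ext (by simp)
  -- endpoints of the three phases
  have h1 : chainw w g n = fun _ => b := by
    funext i
    exact chainw_const w g b n hg1 i (by have := i.isLt; omega)
  have h2 : chainw w g (2 * n) = fun _ => c := by
    have : 2 * n = n + n := by ring
    rw [this, chainw_add, h1]
    funext i
    exact chainw_const _ _ c n (fun s hs => hg2 s hs) i (by have := i.isLt; omega)
  have h3 : chainw w g (3 * n) = w' := by
    have h3n : 3 * n = 2 * n + n := by ring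
    rw [h3n, chainw_add, h2]
    funext i
    have := (chainw_target w' c (fun r => g (2 * n + r)) hg3 n le_rfl i).2
      (by have := i.isLt; omega)
    rw [this]
    congr 1
    exact Fin.ext (by simp)
  refine ⟨3 * n, fun i => chainw w g (i : ℕ), by simp [chainw], ?_, ?_, ?_⟩
  · simp only [Fin.val_last]
    exact h3
  · intro i
    intro hsurj
    obtain hi := i.isLt
    rcases le_or_gt (i : ℕ) n with h | h
    · -- phase 1: missing `a`
      have := chainw_ne w g a ha (i : ℕ)
        (fun s hs => by rw [hg1 s (by omega)]; exact hb)
      obtain ⟨j, hj⟩ := hsurj a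
      exact this j hj
    · rcases le_or_gt (i : ℕ) (2 * n) with h' | h'
      · -- phase 2: missing `d`
        obtain ⟨s, hs⟩ : ∃ s, (i : ℕ) = n + s := ⟨(i : ℕ) - n, by omega⟩
        have hchain : chainw w g (i : ℕ)
            = chainw (fun _ => b) (fun r => g (n + r)) s := by
          rw [hs, chainw_add, h1]
        have := chainw_ne (fun _ : Fin n => b) (fun r => g (n + r)) d
          (fun _ => Ne.symm hdb) s
          (fun r hr => by show g (n + r) ≠ d; rw [hg2 r (by omega)]; exact Ne.symm hdc)
        obtain ⟨j, hj⟩ := hsurj d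
        simp only [] at hj
        rw [hchain] at hj
        exact this j hj
      · -- phase 3: missing `a'`
        obtain ⟨s, hs⟩ : ∃ s, (i : ℕ) = 2 * n + s := ⟨(i : ℕ) - 2 * n, by omega⟩
        have hchain : chainw w g (i : ℕ)
            = chainw (fun _ => c) (fun r => g (2 * n + r)) s := by
          rw [hs, chainw_add, h2]
        have := chainw_ne (fun _ : Fin n => c) (fun r => g (2 * n + r)) a'
          (fun _ => ha' _) s
          (fun r hr => by
            show g (2 * n + r) ≠ a'
            by_cases hrn : r < n
            · rw [hg3 r hrn]; exact ha' _
            · simp only [hgdef]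
              rw [if_neg (by omega), if_neg (by omega), dif_neg (by omega)]
              exact ha' _) 
        obtain ⟨j, hj⟩ := hsurj a'
        simp only [] at hj
        rw [hchain] at hj
        exact this j hj
  · intro i
    show Overlap (chainw w g ((i.castSucc : Fin (3 * n + 1)) : ℕ))
      (chainw w g ((i.succ : Fin (3 * n + 1)) : ℕ))
    simp only [Fin.coe_castSucc, Fin.val_succ]
    exact overlap_shiftw _ _
end

section
/- Let c : Fin k → Fin L assign to each letter of a k-letter alphabet one of L ≥ 3 categories, with every category nonempty (c surjective), and let n ≥ 2. For any two non-passwords w and w' of length n over Fin k, there exists a finite sequence of non-passwords of length n, beginning with w and ending with w', in which every consecutive pair of words overlaps. -/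
/-- `w` is a non-password with respect to the category map `c`: some category `ℓ`
has no representative among the letters of `w`. -/
def NonPassword {n k L : ℕ} (c : Fin k → Fin L) (w : Fin n → Fin k) : Prop :=
  ∃ ℓ : Fin L, ∀ i : Fin n, c (w i) ≠ ℓ

/-- If `c : Fin k → Fin L` assigns categories with `L ≥ 3` and every category nonempty,
and `n ≥ 2`, then any two non-passwords of length `n` are joined by a finite sequence of
non-passwords in which consecutive words overlap. -/
theorem non_passwords_connected (n k L : ℕ) (c : Fin k → Fin L)
    (hL : 3 ≤ L) (hc : Function.Surjective c) (hn : 2 ≤ n)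
    (w w' : Fin n → Fin k) (hw : NonPassword c w) (hw' : NonPassword c w') :
    ∃ (m : ℕ) (f : Fin (m + 1) → Fin n → Fin k),
      f 0 = w ∧ f (Fin.last m) = w' ∧
      (∀ i, NonPassword c (f i)) ∧
      (∀ i : Fin m, Overlap (f i.castSucc) (f i.succ)) := by
  obtain ⟨ℓ, hℓ⟩ := hw
  obtain ⟨ℓ', hℓ'⟩ := hw'
  -- pick a category distinct from ℓ and ℓ'
  have hmu : ∃ μ : Fin L, μ ≠ ℓ ∧ μ ≠ ℓ' := by
    have hcard : ({ℓ, ℓ'} : Finset (Fin L)).card ≤ 2 :=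
      (Finset.card_insert_le _ _).trans (by simp)
    have hne : (({ℓ, ℓ'} : Finset (Fin L))ᶜ).Nonempty := by
      rw [← Finset.card_pos, Finset.card_compl, Fintype.card_fin]
      omega
    obtain ⟨μ, hμ⟩ := hne
    simp only [Finset.mem_compl, Finset.mem_insert, Finset.mem_singleton, not_or] at hμ
    exact ⟨μ, hμ.1, hμ.2⟩
  obtain ⟨μ, hμℓ, hμℓ'⟩ := hmu
  obtain ⟨a, ha⟩ := hc μ
  have hdummy : Fin k := w ⟨0, by omega⟩
  -- define the ambient letter stream
  set g : ℕ → Fin k := fun t =>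
    if h : t < n then w ⟨t, h⟩
    else if t < 2 * n then a
    else if h : t - 2 * n < n then w' ⟨t - 2 * n, h⟩ else hdummy with hg
  refine ⟨2 * n, fun i j => g (i + j), ?_, ?_, ?_, ?_⟩
  · funext j
    simp only [hg, Fin.val_zero, Nat.zero_add, j.isLt, dif_pos]
  · funext j
    have h1 : ¬ (Fin.last (2 * n) : Fin (2 * n + 1)).val + j.val < n := by
      simp only [Fin.val_last]; omega
    have h2 : ¬ (Fin.last (2 * n) : Fin (2 * n + 1)).val + j.val < 2 * n := by
      simp only [Fin.val_last]; omega
    have h3 : (Fin.last (2 * n) : Fin (2 * n + 1)).val + j.val - 2 * n = j.val := by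
      simp only [Fin.val_last]; omega
    simp only [hg, dif_neg h1, if_neg h2, h3, j.isLt, dif_pos]
  · intro i
    by_cases hi : i.val ≤ n
    · refine ⟨ℓ, fun j => ?_⟩
      simp only [hg]
      split
      · exact hℓ _
      · split
        · rw [ha]; exact hμℓ
        · omega
    · refine ⟨ℓ', fun j => ?_⟩
      simp only [hg]
      split
      · omega
      · split
        · rw [ha]; exact hμℓ'
        · split
          · exact hℓ' _
          · omega
  · intro i i' j' hji
    have : (i.castSucc : Fin (2 * n + 1)).val + j'.val = (i.succ : Fin (2 * n + 1)).val + i'.val := by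
      simp only [Fin.coe_castSucc, Fin.val_succ, hji]; omega
    show g (i.castSucc.val + j'.val) = g (i.succ.val + i'.val)
    rw [this]
end

section
/- Let the alphabet Fin k be partitioned by a predicate P : Fin k → Bool into k_v ≥ 1 vowels (P true) and k_c ≥ 1 consonants (P false), and let n ≥ 2. For any two class-alternating words w and w' of length n over Fin k, there exists a finite sequence of class-alternating words of length n, beginning with w and ending with w', in which every consecutive pair of words overlaps. -/
/-- A word `w` of length `n` is class-alternating with respect to the vowel/consonant
classification `P` if consecutive letters always lie in different classes. -/
def ClassAlternating {n k : ℕ} (P : Fin k → Bool) (w : Fin n → Fin k) : Prop :=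
  ∀ i j : Fin n, (j : ℕ) = (i : ℕ) + 1 → P (w i) ≠ P (w j)

def gsplice {n k : ℕ} (hn : 0 < n) (w : Fin n → Fin k) (c : Fin k)
    (w' : Fin n → Fin k) (m t : ℕ) : Fin k :=
  if h : t < n then w ⟨t, h⟩ else if t < m then c else w' ⟨min (t - m) (n - 1), by omega⟩

lemma gsplice_lt {n k : ℕ} (hn : 0 < n) (w : Fin n → Fin k) (c : Fin k)
    (w' : Fin n → Fin k) (m t : ℕ) (h : t < n) :
    gsplice hn w c w' m t = w ⟨t, h⟩ := by
  unfold gsplice; rw [dif_pos h]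

lemma gsplice_mid {n k : ℕ} (hn : 0 < n) (w : Fin n → Fin k) (c : Fin k)
    (w' : Fin n → Fin k) (m t : ℕ) (h1 : n ≤ t) (h2 : t < m) :
    gsplice hn w c w' m t = c := by
  unfold gsplice; rw [dif_neg (by omega), if_pos h2]

lemma gsplice_ge {n k : ℕ} (hn : 0 < n) (w : Fin n → Fin k) (c : Fin k)
    (w' : Fin n → Fin k) (m t : ℕ) (hnm : n ≤ m) (h1 : m ≤ t) (h2 : t - m < n) :
    gsplice hn w c w' m t = w' ⟨t - m, h2⟩ := by
  unfold gsplice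
  rw [dif_neg (by omega), if_neg (by omega)]
  congr 1
  simp only [Fin.mk.injEq]
  omega

/-- If the alphabet `Fin k` is split by `P` into `k_v ≥ 1` vowels and `k_c ≥ 1`
consonants, and `n ≥ 2`, then any two class-alternating words of length `n` are joined
by a finite sequence of class-alternating words in which consecutive words overlap. -/
theorem class_alternating_connected (n k kv kc : ℕ) (P : Fin k → Bool)
    (hkv : (Finset.univ.filter (fun x : Fin k => P x = true)).card = kv)
    (hkc : (Finset.univ.filter (fun x : Fin k => P x = false)).card = kc)
    (hkv1 : 1 ≤ kv) (hkc1 : 1 ≤ kc) (hn : 2 ≤ n)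
    (w w' : Fin n → Fin k) (hw : ClassAlternating P w) (hw' : ClassAlternating P w') :
    ∃ (m : ℕ) (f : Fin (m + 1) → Fin n → Fin k),
      f 0 = w ∧ f (Fin.last m) = w' ∧
      (∀ i, ClassAlternating P (f i)) ∧
      (∀ i : Fin m, Overlap (f i.castSucc) (f i.succ)) := by
  obtain ⟨cv, hcv⟩ : ∃ c : Fin k, P c = true := by
    have h : (Finset.univ.filter (fun x : Fin k => P x = true)).Nonempty := by
      rw [← Finset.card_pos, hkv]; omega
    obtain ⟨c, hc⟩ := h
    exact ⟨c, (Finset.mem_filter.mp hc).2⟩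
  obtain ⟨cc, hcc⟩ : ∃ c : Fin k, P c = false := by
    have h : (Finset.univ.filter (fun x : Fin k => P x = false)).Nonempty := by
      rw [← Finset.card_pos, hkc]; omega
    obtain ⟨c, hc⟩ := h
    exact ⟨c, (Finset.mem_filter.mp hc).2⟩
  obtain ⟨a, ha⟩ : ∃ a, a = w ⟨n - 1, by omega⟩ := ⟨_, rfl⟩
  obtain ⟨b, hb⟩ : ∃ b, b = w' ⟨0, by omega⟩ := ⟨_, rfl⟩
  obtain ⟨c, hc⟩ : ∃ c : Fin k, P c = !(P a) := by
    cases h : P a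
    · exact ⟨cv, by simp [hcv, h]⟩
    · exact ⟨cc, by simp [hcc, h]⟩
  obtain ⟨e, heb, he1, he0⟩ :
      ∃ e : ℕ, e ≤ 1 ∧ (P b = P a → e = 1) ∧ (P b ≠ P a → e = 0) := by
    rcases eq_or_ne (P b) (P a) with hq | hq
    · exact ⟨1, by omega, fun _ => rfl, fun h => absurd hq h⟩
    · exact ⟨0, by omega, fun h => absurd h hq, fun _ => rfl⟩
  obtain ⟨m, hm⟩ : ∃ m, m = n + e := ⟨_, rfl⟩
  have hnm : n ≤ m := by omega
  obtain ⟨g, hg1, hg2, hg3⟩ :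
      ∃ g : ℕ → Fin k,
        (∀ t (h : t < n), g t = w ⟨t, h⟩) ∧
        (∀ t, n ≤ t → t < m → g t = c) ∧
        (∀ t (h1 : m ≤ t) (h2 : t - m < n), g t = w' ⟨t - m, h2⟩) :=
    ⟨gsplice (by omega) w c w' m, fun t h => gsplice_lt _ w c w' m t h,
      fun t h1 h2 => gsplice_mid _ w c w' m t h1 h2,
      fun t h1 h2 => gsplice_ge _ w c w' m t hnm h1 h2⟩
  have key : ∀ t, t + 1 < m + n → P (g t) ≠ P (g (t + 1)) := by
    intro t ht
    by_cases h1 : t + 1 < n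
    · have h0 : t < n := by omega
      rw [hg1 t h0, hg1 (t + 1) h1]
      exact hw ⟨t, h0⟩ ⟨t + 1, h1⟩ rfl
    · by_cases h2 : t < n
      · have hgt : g t = a := by
          rw [hg1 t h2, ha]
          congr 1
          simp only [Fin.mk.injEq]
          omega
        by_cases h3 : t + 1 < m
        · have A1 : n ≤ t + 1 := by omega
          have E := hg2 (t + 1) A1 h3
          rw [hgt, E, hc]
          cases P a <;> simp
        · have hne : P b ≠ P a := by
            intro hq
            have := he1 hq
            omega
          have A1 : m ≤ t + 1 := by omega
          have A2 : t + 1 - m < n := by omega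
          have hgt1 : g (t + 1) = b := by
            rw [hg3 (t + 1) A1 A2, hb]
            congr 1
            simp only [Fin.mk.injEq]
            omega
          rw [hgt, hgt1]
          exact fun hq => hne hq.symm
      · by_cases h3 : t < m
        · have hpb : P b = P a := by
            by_contra hq
            have := he0 hq
            omega
          have A1 : m ≤ t + 1 := by omega
          have A2 : t + 1 - m < n := by omega
          have hgt1 : g (t + 1) = b := by
            rw [hg3 (t + 1) A1 A2, hb]
            congr 1
            simp only [Fin.mk.injEq]
            omega
          have A3 : n ≤ t := by omega
          have E := hg2 t A3 h3
          rw [E, hgt1, hc, hpb]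
          cases P a <;> simp
        · have A1 : m ≤ t := by omega
          have A2 : t - m < n := by omega
          have A3 : m ≤ t + 1 := by omega
          have A4 : t + 1 - m < n := by omega
          have E1 := hg3 t A1 A2
          have E2 := hg3 (t + 1) A3 A4
          rw [E1, E2]
          exact hw' ⟨t - m, A2⟩ ⟨t + 1 - m, A4⟩ (by simp only []; omega)
  refine ⟨m, fun i j => g (i.val + j.val), ?_, ?_, ?_, ?_⟩
  · funext j
    show g ((0 : Fin (m + 1)).val + (j : ℕ)) = w j
    rw [Fin.val_zero, Nat.zero_add, hg1 (j : ℕ) j.isLt]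
  · funext j
    have A1 : m ≤ m + (j : ℕ) := by omega
    have A2 : m + (j : ℕ) - m < n := by have := j.isLt; omega
    have E := hg3 (m + (j : ℕ)) A1 A2
    show g ((Fin.last m).val + (j : ℕ)) = w' j
    rw [Fin.val_last, E]
    exact congrArg w' (Fin.ext (show m + (j : ℕ) - m = (j : ℕ) by omega))
  · intro i ii jj hj
    show P (g ((i : ℕ) + (ii : ℕ))) ≠ P (g ((i : ℕ) + (jj : ℕ)))
    have h1 : (i : ℕ) + (jj : ℕ) = ((i : ℕ) + (ii : ℕ)) + 1 := by omega
    rw [h1]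
    exact key _ (by have := jj.isLt; have := i.isLt; omega)
  · intro i ii jj hj
    show g ((i.castSucc : ℕ) + (jj : ℕ)) = g ((i.succ : ℕ) + (ii : ℕ))
    congr 1
    have e1 : (i.castSucc : ℕ) = (i : ℕ) := rfl
    have e2 : (i.succ : ℕ) = (i : ℕ) + 1 := rfl
    rw [e1, e2]
    omega
end
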